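/- arXiv:math/0602575 — 3 statements merged into one kernel-verified Lean document; each statement's English description precedes it below -/
import Mathlib

section
/- Forest expansion of cofactors of principal submatrices of the Kirchhoff matrix (equation (6)). Let Γ be a weighted digraph on a finite vertex set V = {1,…,n}, let i, j ∈ V, and let φ ⊆ V ∖ {i,j}. Then L_{−φ}^{ij} = ε(𝔉_{φ∪{i}}^{i→j}), where L_{−φ}^{ij} is the cofactor, within the principal submatrix L_{−φ}, of the entry corresponding to the (i,j) entry of L(Γ). -/
open scoped Classical

/-- The Kirchhoff (Laplacian) matrix of a weighted digraph on vertex set `α` with arc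
weights `ε`: `ℓ i j = -ε j i` for `j ≠ i`, and `ℓ i i = ∑_{k ≠ i} ε k i`. -/
noncomputable def kirchhoff {α : Type*} [Fintype α] [DecidableEq α]
    (ε : α → α → ℝ) : Matrix α α ℝ :=
  Matrix.of fun i j =>
    if i = j then ∑ k ∈ Finset.univ.erase i, ε k i else - ε j i

/-- `F` is a spanning diverging forest: every arc joins distinct vertices, every vertex
has at most one incoming arc, and there are no cycles. -/
def IsDivForest {α : Type*} [Fintype α] [DecidableEq α] (F : Finset (α × α)) : Prop :=
  (∀ p ∈ F, p.1 ≠ p.2) ∧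
  (∀ b : α, (F.filter fun p => p.2 = b).card ≤ 1) ∧
  ∀ a : α, ¬ Relation.TransGen (fun x y : α => (x, y) ∈ F) a a

/-- The weight of a set of arcs: the product of the arc weights. -/
noncomputable def arcWt {α : Type*} (ε : α → α → ℝ) (F : Finset (α × α)) : ℝ :=
  ∏ p ∈ F, ε p.1 p.2

/-- The set of roots of `F`, i.e. the vertices of in-degree 0. -/
noncomputable def rootSet {α : Type*} [Fintype α] [DecidableEq α]
    (F : Finset (α × α)) : Finset α :=
  Finset.univ.filter fun v => ∀ a, (a, v) ∉ F

/-- The set of all spanning diverging forests. -/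
noncomputable def divForests (α : Type*) [Fintype α] [DecidableEq α] :
    Finset (Finset (α × α)) :=
  Finset.univ.filter IsDivForest

/-- The set `𝔉^{i→j}` of spanning diverging forests in which `i` is a root and there is
a directed path from `i` to `j`. -/
noncomputable def divForestsFromTo {α : Type*} [Fintype α] [DecidableEq α] (i j : α) :
    Finset (Finset (α × α)) :=
  Finset.univ.filter fun F => IsDivForest F ∧ (∀ a, (a, i) ∉ F) ∧
    Relation.ReflTransGen (fun x y : α => (x, y) ∈ F) i j

/-- The set `𝔉_φ` of spanning diverging forests whose set of roots is exactly `φ`. -/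
noncomputable def divForestsRootedAt {α : Type*} [Fintype α] [DecidableEq α]
    (φ : Finset α) : Finset (Finset (α × α)) :=
  Finset.univ.filter fun F => IsDivForest F ∧ rootSet F = φ

open Matrix Relation Finset

section AuxDet

variable {ι : Type*} [Fintype ι] [DecidableEq ι]

/-- The "reduced forest matrix": row `i0` is `e_{j0}`, and each other row `u` is
`e_u - e_{p u}` (with the second term zero when `p u = none`). -/
noncomputable def auxD (i0 j0 : ι) (p : ι → Option ι) : Matrix ι ι ℝ :=
  Matrix.of fun u => if u = i0 then Pi.single j0 1 else
    Pi.single u 1 - (p u).elim 0 fun a => Pi.single a 1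

/-- The child-to-parent step relation. -/
def auxStep (i0 : ι) (p : ι → Option ι) (u v : ι) : Prop := u ≠ i0 ∧ p u = some v

theorem auxD_det_zero_of_cycle (i0 j0 : ι) (p : ι → Option ι)
    (h : ∃ u, TransGen (auxStep i0 p) u u) : (auxD i0 j0 p).det = 0 := by
  obtain ⟨u, hu⟩ := h
  set st := auxStep i0 p with hst
  set C : Finset ι := univ.filter (fun w => TransGen st u w ∧ TransGen st w u) with hC
  have huC : u ∈ C := by simp [hC, hu]
  have hmemC : ∀ w, w ∈ C ↔ TransGen st u w ∧ TransGen st w u := by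
    intro w; simp [hC]
  have hne : ∀ w ∈ C, w ≠ i0 := by
    intro w hw
    obtain ⟨-, h2⟩ := (hmemC w).1 hw
    obtain ⟨b, hb, -⟩ := TransGen.head'_iff.1 h2
    exact hb.1
  -- every element of C has its parent in C
  have hpC : ∀ w ∈ C, ∃ v ∈ C, p w = some v := by
    intro w hw
    obtain ⟨h1, h2⟩ := (hmemC w).1 hw
    obtain ⟨b, hb, hbu⟩ := TransGen.head'_iff.1 h2
    refine ⟨b, (hmemC b).2 ⟨h1.tail hb, ?_⟩, hb.2⟩
    exact TransGen.trans_right hbu hu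
  -- every element of C has a child in C
  have hsurj : ∀ c ∈ C, ∃ w ∈ C, p w = some c := by
    intro c hc
    obtain ⟨h1, h2⟩ := (hmemC c).1 hc
    obtain ⟨b, hub, hbc⟩ := TransGen.tail'_iff.1 h1
    exact ⟨b, (hmemC b).2 ⟨hu.trans_left hub, TransGen.head hbc h2⟩, hbc.2⟩
  -- the parent map on C, as a self-map of the subtype
  have hchoice : ∀ w : {x // x ∈ C}, ∃ v : {x // x ∈ C}, p ↑w = some ↑v := by
    rintro ⟨w, hw⟩
    obtain ⟨v, hv, hpv⟩ := hpC w hw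
    exact ⟨⟨v, hv⟩, hpv⟩
  choose e he using hchoice
  have hebij : Function.Bijective e := by
    apply Function.Surjective.bijective_of_finite
    intro c
    obtain ⟨w, hw, hpw⟩ := hsurj ↑c c.2
    refine ⟨⟨w, hw⟩, ?_⟩
    have h2 := he ⟨w, hw⟩
    rw [hpw] at h2
    exact Subtype.ext (Option.some_injective _ h2.symm)
  have hvec : (fun w => if w ∈ C then (1:ℝ) else 0) ᵥ* (auxD i0 j0 p) = 0 := by
    funext c
    simp only [vecMul, dotProduct, Pi.zero_apply]
    have h1 : ∀ w, (if w ∈ C then (1:ℝ) else 0) * auxD i0 j0 p w c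
        = if w ∈ C then auxD i0 j0 p w c else 0 := by intro w; split <;> simp
    rw [Finset.sum_congr rfl fun w _ => h1 w, Finset.sum_ite_mem, univ_inter]
    have h2 : ∀ w : {x // x ∈ C}, auxD i0 j0 p ↑w c
        = (Pi.single (↑w : ι) 1 : ι → ℝ) c - (Pi.single (↑(e w) : ι) 1 : ι → ℝ) c := by
      intro w
      have : auxD i0 j0 p ↑w = Pi.single (↑w : ι) (1:ℝ) - (p ↑w).elim 0 fun a => Pi.single a 1 := by
        funext v
        simp [auxD, hne _ w.2]
      rw [this, he w]
      simp
    rw [← Finset.sum_coe_sort C (fun w => auxD i0 j0 p w c)]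
    rw [Finset.sum_congr rfl fun w _ => h2 w, Finset.sum_sub_distrib]
    rw [hebij.sum_comp (fun w : {x // x ∈ C} => (Pi.single (↑w : ι) 1 : ι → ℝ) c)]
    exact sub_self _
  by_contra hdet
  have h0 := Matrix.eq_zero_of_vecMul_eq_zero hdet hvec
  have := congr_fun h0 u
  simp [huC] at this

theorem auxD_det_zero_of_not_reach (i0 j0 : ι) (p : ι → Option ι)
    (h : ¬ ReflTransGen (auxStep i0 p) j0 i0) : (auxD i0 j0 p).det = 0 := by
  set st := auxStep i0 p with hst
  set w : ι → ℝ := fun v => if ReflTransGen st v i0 then 1 else 0 with hw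
  have hvec : (auxD i0 j0 p) *ᵥ w = 0 := by
    funext x
    simp only [mulVec, dotProduct, Pi.zero_apply]
    by_cases hx : x = i0
    · have h1 : ∀ v, auxD i0 j0 p x v * w v = (Pi.single j0 1 : ι → ℝ) v * w v := by
        intro v; simp [auxD, hx]
      rw [Finset.sum_congr rfl fun v _ => h1 v]
      rw [Finset.sum_eq_single j0 (by intro b _ hb; simp [Pi.single_apply, hb]) (by simp)]
      simp [hw, h]
    · have hrow : ∀ v, auxD i0 j0 p x v * w v
          = (Pi.single x 1 : ι → ℝ) v * w v
            - ((p x).elim 0 fun a => Pi.single a 1 : ι → ℝ) v * w v := by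
        intro v; simp [auxD, hx]; ring
      rw [Finset.sum_congr rfl fun v _ => hrow v, Finset.sum_sub_distrib]
      rw [Finset.sum_eq_single x (by intro b _ hb; simp [Pi.single_apply, hb]) (by simp)]
      simp only [Pi.single_eq_same, one_mul]
      rcases hpx : p x with - | a
      · have hnr : ¬ ReflTransGen st x i0 := by
          intro hreach
          rcases hreach.cases_head with h1 | ⟨b, hb, -⟩
          · exact hx h1
          · obtain ⟨-, hb2⟩ := hb
            rw [hpx] at hb2
            cases hb2
        have hwx : w x = 0 := by simp [hw, hnr]
        simp [hwx, hpx]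
      · rw [Finset.sum_eq_single a (by intro b _ hb; simp [hpx, Pi.single_apply, hb]) (by simp)]
        have hiff : ReflTransGen st x i0 ↔ ReflTransGen st a i0 := by
          constructor
          · intro hr
            rcases hr.cases_head with h1 | ⟨b, hb, hb2⟩
            · exact absurd h1 hx
            · obtain ⟨-, hb3⟩ := hb
              rw [hpx] at hb3
              obtain rfl := Option.some_injective _ hb3
              exact hb2
          · intro hr; exact hr.head ⟨hx, hpx⟩
        have : w x = w a := by simp only [hw]; rw [hiff]
        rw [this]
        simp
  by_contra hdet
  have h0 := Matrix.eq_zero_of_mulVec_eq_zero hdet hvec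
  have := congr_fun h0 i0
  simp [hw] at this
  exact this ReflTransGen.refl

theorem auxD_det_one (i0 j0 : ι) (p : ι → Option ι)
    (hac : ∀ u, ¬ TransGen (auxStep i0 p) u u)
    (hreach : ReflTransGen (auxStep i0 p) j0 i0) : (auxD i0 j0 p).det = 1 := by
  set st := auxStep i0 p with hst
  set bh : ι → ℕ := fun u => (univ.filter fun w => TransGen st u w).card with hbh
  have hlt : ∀ {u v}, st u v → bh v < bh u := by
    intro u v huv
    apply Finset.card_lt_card
    constructor
    · intro w hw
      simp only [mem_filter, mem_univ, true_and] at hw ⊢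
      exact hw.head huv
    · intro hsub
      have hv : v ∈ univ.filter fun w => TransGen st u w := by
        simp only [mem_filter, mem_univ, true_and]
        exact TransGen.single huv
      have h2 := hsub hv
      simp only [mem_filter, mem_univ, true_and] at h2
      exact hac v h2
  have hrow : ∀ u, u ≠ i0 →
      auxD i0 j0 p u = Pi.single u 1 - (p u).elim 0 fun a => Pi.single a 1 := by
    intro u hu; funext v; simp [auxD, hu]
  -- step 1: we may replace the row `e_{j0}` at `i0` by `e_{i0}`
  have key : ∀ x, ReflTransGen st x i0 →
      ((auxD i0 j0 p).updateRow i0 (Pi.single x 1)).det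
        = ((auxD i0 j0 p).updateRow i0 (Pi.single i0 1)).det := by
    intro x hx
    induction hx using ReflTransGen.head_induction_on with
    | refl => rfl
    | head h' hrt ih =>
      rename_i a c
      obtain ⟨ha, hpa⟩ := h'
      have hra : auxD i0 j0 p a = Pi.single a 1 - Pi.single c 1 := by
        rw [hrow a ha, hpa]; rfl
      have hsum : (Pi.single a 1 : ι → ℝ) = Pi.single c 1 + auxD i0 j0 p a := by
        rw [hra]; ring
      rw [hsum, Matrix.det_updateRow_add, ih]
      have hzero : ((auxD i0 j0 p).updateRow i0 (auxD i0 j0 p a)).det = 0 := by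
        apply Matrix.det_zero_of_row_eq (Ne.symm ha)
        rw [Matrix.updateRow_self, Matrix.updateRow_ne ha]
      rw [hzero, add_zero]
  have hD0 : (auxD i0 j0 p).updateRow i0 (Pi.single j0 1) = auxD i0 j0 p := by
    have h1 : auxD i0 j0 p i0 = Pi.single j0 1 := by funext v; simp [auxD]
    conv_lhs => rw [← h1]
    exact Matrix.updateRow_eq_self _ _
  have hdet1 : (auxD i0 j0 p).det
      = ((auxD i0 j0 p).updateRow i0 (Pi.single i0 1)).det := by
    rw [← key j0 hreach, hD0]
  set D' := (auxD i0 j0 p).updateRow i0 (Pi.single i0 1) with hD'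
  have hD'app : ∀ u v, D' u v = if u = i0 then (Pi.single i0 1 : ι → ℝ) v
      else (Pi.single u 1 : ι → ℝ) v - ((p u).elim 0 fun a => Pi.single a 1 : ι → ℝ) v := by
    intro u v
    rw [hD', Matrix.updateRow_apply]
    split
    · rfl
    · next h => rw [hrow u h]; rfl
  have hbt : D'.BlockTriangular (OrderDual.toDual ∘ bh) := by
    intro u v huv
    simp only [Function.comp_apply, OrderDual.toDual_lt_toDual] at huv
    rw [hD'app]
    split
    · next h =>
      have hvne : v ≠ i0 := by
        intro hv
        rw [h, hv] at huv
        exact lt_irrefl _ huv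
      simp [Pi.single_apply, hvne]
    · next h =>
      have hvu : v ≠ u := by
        intro hv
        rw [hv] at huv
        exact lt_irrefl _ huv
      rcases hpu : p u with - | a
      · simp [Pi.single_apply, hvu]
      · have hav : a ≠ v := by
          intro hav
          subst hav
          exact absurd huv (not_lt_of_gt (hlt ⟨h, hpu⟩))
        simp [Pi.single_apply, hvu, Ne.symm hav]
  have hblocks : ∀ k, D'.toSquareBlock (OrderDual.toDual ∘ bh) k = 1 := by
    intro k
    apply Matrix.ext
    rintro ⟨u, hu⟩ ⟨v, hv⟩
    have hbuv : bh u = bh v := by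
      have h2 : OrderDual.toDual (bh u) = OrderDual.toDual (bh v) := hu.trans hv.symm
      simpa using h2
    by_cases huv : u = v
    · subst huv
      have hrhs : (1 : Matrix {i // (OrderDual.toDual ∘ bh) i = k}
          {i // (OrderDual.toDual ∘ bh) i = k} ℝ) ⟨u, hu⟩ ⟨u, hv⟩ = 1 := by
        rw [Matrix.one_apply, if_pos (Subtype.ext rfl)]
      show D' u u = _
      rw [hrhs, hD'app]
      split
      · next h => rw [h]; simp
      · next h =>
        rcases hpu : p u with - | a
        · simp
        · have hau : a ≠ u := by
            intro hau
            subst hau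
            exact hac _ (TransGen.single ⟨h, hpu⟩)
          simp [Pi.single_apply, Ne.symm hau]
    · have hrhs : (1 : Matrix {i // (OrderDual.toDual ∘ bh) i = k}
          {i // (OrderDual.toDual ∘ bh) i = k} ℝ) ⟨u, hu⟩ ⟨v, hv⟩ = 0 := by
        rw [Matrix.one_apply, if_neg (fun hc => huv (congrArg Subtype.val hc))]
      show D' u v = _
      rw [hrhs, hD'app]
      split
      · next h =>
        have hvne : v ≠ i0 := fun hv2 => huv (h.trans hv2.symm)
        simp [Pi.single_apply, hvne]
      · next h =>
        have hvu : v ≠ u := Ne.symm huv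
        rcases hpu : p u with - | a
        · simp [Pi.single_apply, hvu]
        · have hav : a ≠ v := by
            intro hav
            subst hav
            exact absurd hbuv (Nat.ne_of_gt (hlt ⟨h, hpu⟩))
          simp [Pi.single_apply, hvu, Ne.symm hav]
  rw [hdet1, hbt.det]
  rw [Finset.prod_congr rfl fun k _ => by rw [hblocks k, Matrix.det_one]]
  exact Finset.prod_const_one

end AuxDet

section Main

/-- The parent map on the subtype determined by `r`. -/
noncomputable def mainP {n : ℕ} (φ : Finset (Fin n)) (r : {v : Fin n // v ∉ φ} → Fin n) :
    {v : Fin n // v ∉ φ} → Option {v : Fin n // v ∉ φ} :=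
  fun u => if h : r u ∉ φ then some ⟨r u, h⟩ else none

theorem main_expand {n : ℕ} (ε : Fin n → Fin n → ℝ) (φ : Finset (Fin n)) (i j : Fin n)
    (hi : i ∉ φ) (hj : j ∉ φ) :
    (((kirchhoff ε).submatrix (fun v : {v : Fin n // v ∉ φ} => (v : Fin n))
        (fun v : {v : Fin n // v ∉ φ} => (v : Fin n))).updateRow ⟨i, hi⟩
          (Pi.single ⟨j, hj⟩ 1)).det
      = ∑ r ∈ Fintype.piFinset (fun u : {v : Fin n // v ∉ φ} =>
          if u = ⟨i, hi⟩ then {i} else Finset.univ.erase ↑u),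
          (∏ u ∈ Finset.univ.erase (⟨i, hi⟩ : {v : Fin n // v ∉ φ}), ε (r u) ↑u)
            * (auxD (⟨i, hi⟩ : {v : Fin n // v ∉ φ}) ⟨j, hj⟩ (mainP φ r)).det := by
  classical
  set S := {v : Fin n // v ∉ φ}
  set iS : S := ⟨i, hi⟩ with hiS
  set jS : S := ⟨j, hj⟩ with hjS
  set A := fun u : S => if u = iS then ({i} : Finset (Fin n)) else Finset.univ.erase ↑u with hA
  set g : S → Fin n → (S → ℝ) := fun u a =>
    if u = iS then Pi.single jS 1
    else ε a ↑u • (Pi.single u 1 - if h : a ∉ φ then Pi.single (⟨a, h⟩ : S) 1 else 0) with hg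
  have hgv : ∀ (u : S) (a : Fin n) (v : S), u ≠ iS → g u a v
      = ε a ↑u * ((if v = u then (1:ℝ) else 0) - (if (↑v : Fin n) = a then 1 else 0)) := by
    intro u a v hu
    simp only [hg, if_neg hu, Pi.smul_apply, Pi.sub_apply, smul_eq_mul]
    congr 1
    congr 1
    · exact Pi.single_apply u 1 v
    · by_cases h : a ∉ φ
      · rw [dif_pos h, Pi.single_apply]
        exact if_congr (by simp [Subtype.ext_iff]) rfl rfl
      · rw [dif_neg h]
        have hva : (↑v : Fin n) ≠ a := fun hva => v.2 (hva ▸ not_not.mp h)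
        simp [hva]
  have hrows : (((kirchhoff ε).submatrix (fun v : S => (v : Fin n))
      (fun v : S => (v : Fin n))).updateRow iS (Pi.single jS 1))
      = Matrix.of (fun u => ∑ a ∈ A u, g u a) := by
    apply Matrix.ext
    intro u v
    rw [Matrix.updateRow_apply]
    by_cases hu : u = iS
    · rw [if_pos hu]
      simp [hA, hg, hu]
    · rw [if_neg hu, Matrix.of_apply]
      show _ = (∑ a ∈ A u, g u a) v
      rw [Finset.sum_apply]
      simp only [hA, if_neg hu]
      rw [Finset.sum_congr rfl (fun a _ => hgv u a v hu)]
      simp only [Matrix.submatrix_apply, kirchhoff, Matrix.of_apply]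
      by_cases hvu : v = u
      · have hvu' : (↑u : Fin n) = ↑v := by rw [hvu]
        rw [if_pos hvu']
        refine Finset.sum_congr rfl fun a ha => ?_
        have hva : (↑v : Fin n) ≠ a := fun h => (Finset.mem_erase.mp ha).1 (h ▸ hvu'.symm ▸ rfl)
        rw [if_pos hvu, if_neg hva]
        ring
      · have hvu' : (↑u : Fin n) ≠ ↑v := fun h => hvu (Subtype.ext h.symm)
        rw [if_neg hvu']
        have hterm : ∀ a ∈ Finset.univ.erase (↑u : Fin n),
            ε a ↑u * ((if v = u then (1:ℝ) else 0) - (if (↑v : Fin n) = a then 1 else 0))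
              = -(if (↑v : Fin n) = a then ε a ↑u else 0) := by
          intro a _
          rw [if_neg hvu]
          split <;> ring
        rw [Finset.sum_congr rfl hterm, Finset.sum_neg_distrib]
        rw [Finset.sum_ite_eq (Finset.univ.erase (↑u : Fin n)) (↑v : Fin n) (fun a => ε a ↑u)]
        rw [if_pos (Finset.mem_erase.mpr ⟨fun h => hvu' h.symm, Finset.mem_univ _⟩)]
  rw [hrows]
  have h2 := (Matrix.detRowAlternating :
      (S → ℝ) [⋀^S]→ₗ[ℝ] ℝ).toMultilinearMap.map_sum_finset g A
  refine h2.trans (Finset.sum_congr rfl fun r hr => ?_)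
  have hsm : (fun u => g u (r u))
      = fun u => (if u = iS then (1:ℝ) else ε (r u) ↑u) • (auxD iS jS (mainP φ r)) u := by
    funext u
    by_cases hu : u = iS
    · simp only [hg, if_pos hu, one_smul]
      rw [hu]
      funext v
      simp [auxD]
    · simp only [hg, if_neg hu]
      congr 1
      have : auxD iS jS (mainP φ r) u
          = Pi.single u 1 - ((mainP φ r) u).elim 0 fun a => Pi.single a 1 := by
        funext v; simp [auxD, hu]; rfl
      rw [this, mainP]
      congr 1
      split
      · rfl
      · rfl
  rw [show ((Matrix.detRowAlternating : (S → ℝ) [⋀^S]→ₗ[ℝ] ℝ).toMultilinearMap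
      fun u => g u (r u)) = Matrix.detRowAlternating (fun u => g u (r u)) from rfl, hsm]
  have h3 := (Matrix.detRowAlternating :
      (S → ℝ) [⋀^S]→ₗ[ℝ] ℝ).toMultilinearMap.map_smul_univ
      (fun u => if u = iS then (1:ℝ) else ε (r u) ↑u) (fun u => auxD iS jS (mainP φ r) u)
  rw [show (Matrix.detRowAlternating
      (fun u => (if u = iS then (1:ℝ) else ε (r u) ↑u) • (auxD iS jS (mainP φ r)) u) : ℝ)
      = ((Matrix.detRowAlternating : (S → ℝ) [⋀^S]→ₗ[ℝ] ℝ).toMultilinearMap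
        fun u => (if u = iS then (1:ℝ) else ε (r u) ↑u) • (auxD iS jS (mainP φ r)) u) from rfl,
    h3]
  have hprod : (∏ u : S, (if u = iS then (1:ℝ) else ε (r u) ↑u))
      = ∏ u ∈ Finset.univ.erase iS, ε (r u) ↑u := by
    rw [← Finset.mul_prod_erase Finset.univ _ (Finset.mem_univ iS), if_pos rfl, one_mul]
    exact Finset.prod_congr rfl fun u hu => if_neg (Finset.mem_erase.mp hu).1
  rw [hprod]
  rfl

/-- Membership in the image forest. -/
theorem mem_PhiF {n : ℕ} (φ : Finset (Fin n)) (i : Fin n) (hi : i ∉ φ)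
    (r : {v : Fin n // v ∉ φ} → Fin n) (p : Fin n × Fin n) :
    p ∈ (Finset.univ.erase (⟨i, hi⟩ : {v : Fin n // v ∉ φ})).image
        (fun u : {v : Fin n // v ∉ φ} => ((r u, (u : Fin n)) : Fin n × Fin n))
      ↔ ∃ u : {v : Fin n // v ∉ φ}, u ≠ ⟨i, hi⟩ ∧ p.1 = r u ∧ p.2 = ↑u := by
  simp only [Finset.mem_image, Finset.mem_erase, Finset.mem_univ, and_true]
  constructor
  · rintro ⟨u, hu, rfl⟩
    exact ⟨u, hu, rfl, rfl⟩
  · rintro ⟨u, hu, h1, h2⟩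
    exact ⟨u, hu, by rw [Prod.ext_iff]; exact ⟨h1.symm, h2.symm⟩⟩


/-- **Forest expansion of cofactors of principal submatrices of the Kirchhoff matrix**
(equation (6)). For `i, j ∉ φ`, the cofactor, within the principal submatrix `L_{−φ}`,
of the entry corresponding to the `(i,j)` entry of `L(Γ)` (which is the `(j,i)` entry of
the adjugate of `L_{−φ}`) equals `ε(𝔉_{φ∪{i}}^{i→j})`. -/
theorem principal_submatrix_cofactor_eq_forests (n : ℕ) (ε : Fin n → Fin n → ℝ)
    (hdiag : ∀ a, ε a a = 0) (φ : Finset (Fin n)) (i j : Fin n)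
    (hi : i ∉ φ) (hj : j ∉ φ) :
    ((kirchhoff ε).submatrix (fun v : {v : Fin n // v ∉ φ} => (v : Fin n))
        (fun v : {v : Fin n // v ∉ φ} => (v : Fin n))).adjugate ⟨j, hj⟩ ⟨i, hi⟩
      = ∑ F ∈ divForestsRootedAt (insert i φ) ∩ divForestsFromTo i j, arcWt ε F := by
  classical
  rw [Matrix.adjugate_apply, main_expand ε φ i j hi hj]
  set S := {v : Fin n // v ∉ φ}
  set iS : S := ⟨i, hi⟩ with hiS
  set jS : S := ⟨j, hj⟩ with hjS
  set P := Fintype.piFinset (fun u : S => if u = iS then ({i} : Finset (Fin n))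
    else Finset.univ.erase ↑u) with hP
  set Good : (S → Fin n) → Prop := fun r =>
    (∀ u, ¬ TransGen (auxStep iS (mainP φ r)) u u) ∧
      ReflTransGen (auxStep iS (mainP φ r)) jS iS with hGood
  have hstep_iff : ∀ (r : S → Fin n) (u v : S),
      auxStep iS (mainP φ r) u v ↔ (u ≠ iS ∧ r u = ↑v) := by
    intro r u v
    unfold auxStep mainP
    constructor
    · rintro ⟨h1, h2⟩
      refine ⟨h1, ?_⟩
      split at h2
      · exact congrArg Subtype.val (Option.some_injective _ h2)
      · cases h2
    · rintro ⟨h1, h2⟩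
      refine ⟨h1, ?_⟩
      have hru : r u ∉ φ := h2 ▸ v.2
      rw [dif_pos hru]
      exact congrArg some (Subtype.ext h2)
  rw [← Finset.sum_filter_add_sum_filter_not P Good]
  have hbad : ∑ r ∈ P.filter (fun r => ¬ Good r),
      (∏ u ∈ Finset.univ.erase iS, ε (r u) ↑u) * (auxD iS jS (mainP φ r)).det = 0 := by
    apply Finset.sum_eq_zero
    intro r hr
    obtain ⟨-, hng⟩ := Finset.mem_filter.mp hr
    by_cases hcyc : ∃ u, TransGen (auxStep iS (mainP φ r)) u u
    · rw [auxD_det_zero_of_cycle iS jS (mainP φ r) hcyc, mul_zero]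
    · have hnreach : ¬ ReflTransGen (auxStep iS (mainP φ r)) jS iS := by
        intro hreach
        exact hng ⟨fun u hu => hcyc ⟨u, hu⟩, hreach⟩
      rw [auxD_det_zero_of_not_reach iS jS (mainP φ r) hnreach, mul_zero]
  rw [hbad, add_zero]
  have hone : ∀ r ∈ P.filter Good,
      (∏ u ∈ Finset.univ.erase iS, ε (r u) ↑u) * (auxD iS jS (mainP φ r)).det
        = ∏ u ∈ Finset.univ.erase iS, ε (r u) ↑u := by
    intro r hr
    obtain ⟨-, hg⟩ := Finset.mem_filter.mp hr
    rw [auxD_det_one iS jS (mainP φ r) hg.1 hg.2, mul_one]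
  rw [Finset.sum_congr rfl hone]
  -- the bijection with forests
  refine Finset.sum_bij (fun r _ => (Finset.univ.erase iS).image
    (fun u : S => ((r u, (u : Fin n)) : Fin n × Fin n))) ?_ ?_ ?_ ?_
  · -- membership
    intro r hr
    obtain ⟨hrP, hgood⟩ := Finset.mem_filter.mp hr
    rw [Fintype.mem_piFinset] at hrP
    set F := (Finset.univ.erase iS).image (fun u : S => ((r u, (u : Fin n)) : Fin n × Fin n))
      with hF
    have hmemF : ∀ p : Fin n × Fin n, p ∈ F ↔ ∃ u : S, u ≠ iS ∧ p.1 = r u ∧ p.2 = ↑u :=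
      fun p => mem_PhiF φ i hi r p
    have hrne : ∀ u : S, u ≠ iS → r u ≠ (↑u : Fin n) := by
      intro u hu
      have := hrP u
      rw [if_neg hu, Finset.mem_erase] at this
      exact this.1
    have harc : ∀ p ∈ F, p.1 ≠ p.2 := by
      rintro p hp
      obtain ⟨u, hu, h1, h2⟩ := (hmemF p).mp hp
      rw [h1, h2]
      exact hrne u hu
    have hindeg : ∀ b : Fin n, ((F.filter fun p => p.2 = b).card ≤ 1) := by
      intro b
      rw [Finset.card_le_one]
      intro p hp q hq
      obtain ⟨hpF, hpb⟩ := Finset.mem_filter.mp hp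
      obtain ⟨hqF, hqb⟩ := Finset.mem_filter.mp hq
      obtain ⟨u, hu, h1, h2⟩ := (hmemF p).mp hpF
      obtain ⟨u', hu', h1', h2'⟩ := (hmemF q).mp hqF
      have huu : u = u' := Subtype.ext (by rw [← h2, ← h2', hpb, hqb])
      rw [Prod.ext_iff, h1, h2, h1', h2', huu]
      exact ⟨rfl, rfl⟩
    -- lifting arc-paths to subtype step-paths
    have hlift : ∀ x y : Fin n, TransGen (fun a b => (a, b) ∈ F) x y → ∀ hx : x ∉ φ,
        ∃ hy : y ∉ φ, TransGen (auxStep iS (mainP φ r)) ⟨y, hy⟩ ⟨x, hx⟩ := by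
      intro x y hxy
      induction hxy with
      | single h =>
        rename_i b
        intro hx
        obtain ⟨u, hu, h1, h2⟩ := (hmemF _).mp h
        have hb : b ∉ φ := by have h2' : b = (↑u : Fin n) := h2; rw [h2']; exact u.2
        have hbu : (⟨b, hb⟩ : S) = u := Subtype.ext h2
        refine ⟨hb, TransGen.single ?_⟩
        rw [hstep_iff, hbu]
        exact ⟨hu, h1.symm⟩
      | tail hxb hbc ih =>
        rename_i b c
        intro hx
        obtain ⟨hb, htg⟩ := ih hx
        obtain ⟨u, hu, h1, h2⟩ := (hmemF _).mp hbc
        have hc : c ∉ φ := by have h2' : c = (↑u : Fin n) := h2; rw [h2']; exact u.2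
        have hcu : (⟨c, hc⟩ : S) = u := Subtype.ext h2
        refine ⟨hc, TransGen.head ?_ htg⟩
        rw [hstep_iff, hcu]
        exact ⟨hu, h1.symm⟩
    have hnocyc : ∀ a : Fin n, ¬ TransGen (fun x y : Fin n => (x, y) ∈ F) a a := by
      intro a hcyc
      obtain ⟨b, hb, -⟩ := TransGen.head'_iff.mp hcyc
      obtain ⟨u, hu, h1, h2⟩ := (hmemF _).mp hb
      have ha : a ∉ φ := by
        obtain ⟨c, -, hc⟩ := TransGen.tail'_iff.mp hcyc
        obtain ⟨w, hw, hw1, hw2⟩ := (hmemF _).mp hc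
        exact (by have hw2' : a = (↑w : Fin n) := hw2; rw [hw2']; exact w.2 : a ∉ φ)
      obtain ⟨ha', htg⟩ := hlift a a hcyc ha
      exact hgood.1 ⟨a, ha'⟩ (by convert htg)
    have hforest : IsDivForest F := ⟨harc, hindeg, hnocyc⟩
    have hnoroot : ∀ v : Fin n, (∀ a, (a, v) ∉ F) ↔ v ∈ insert i φ := by
      intro v
      constructor
      · intro hv
        by_contra hvi
        rw [Finset.mem_insert, not_or] at hvi
        have hvφ : v ∉ φ := hvi.2
        have hne : (⟨v, hvφ⟩ : S) ≠ iS := fun hc => hvi.1 (congrArg Subtype.val hc)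
        exact hv (r ⟨v, hvφ⟩) ((hmemF _).mpr ⟨⟨v, hvφ⟩, hne, rfl, rfl⟩)
      · intro hv a hav
        obtain ⟨u, hu, h1, h2⟩ := (hmemF _).mp hav
        rcases Finset.mem_insert.mp hv with h | h
        · exact hu (Subtype.ext (by rw [← h2, h]))
        · exact u.2 (h2 ▸ h)
    have hroots : rootSet F = insert i φ := by
      ext v
      simp only [rootSet, Finset.mem_filter]
      constructor
      · rintro ⟨-, h⟩
        exact (hnoroot v).mp h
      · intro h
        exact ⟨Finset.mem_univ _, (hnoroot v).mpr h⟩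
    have hnoi : ∀ a, (a, i) ∉ F :=
      (hnoroot i).mpr (Finset.mem_insert_self i φ)
    have hpath : ReflTransGen (fun x y : Fin n => (x, y) ∈ F) i j := by
      have hBwd : ∀ x : S, ReflTransGen (auxStep iS (mainP φ r)) x iS →
          ReflTransGen (fun x y : Fin n => (x, y) ∈ F) i ↑x := by
        intro x hx
        induction hx using ReflTransGen.head_induction_on with
        | refl => exact ReflTransGen.refl
        | head h' hrt ih =>
          rename_i a c
          refine ih.tail ?_
          rw [hstep_iff] at h'
          exact (hmemF _).mpr ⟨a, h'.1, h'.2.symm, rfl⟩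
      exact hBwd jS hgood.2
    simp only [Finset.mem_inter, divForestsRootedAt, divForestsFromTo, Finset.mem_filter]
    exact ⟨⟨Finset.mem_univ _, hforest, hroots⟩, Finset.mem_univ _, hforest, hnoi, hpath⟩
  · -- injectivity
    intro r1 hr1 r2 hr2 heq
    obtain ⟨hrP1, -⟩ := Finset.mem_filter.mp hr1
    obtain ⟨hrP2, -⟩ := Finset.mem_filter.mp hr2
    rw [Fintype.mem_piFinset] at hrP1 hrP2
    replace heq : (Finset.univ.erase iS).image
        (fun u : S => ((r1 u, (u : Fin n)) : Fin n × Fin n))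
      = (Finset.univ.erase iS).image
        (fun u : S => ((r2 u, (u : Fin n)) : Fin n × Fin n)) := heq
    funext u
    by_cases hu : u = iS
    · have h1 := hrP1 u
      have h2 := hrP2 u
      rw [if_pos hu, Finset.mem_singleton] at h1 h2
      rw [h1, h2]
    · have : ((r1 u, (↑u : Fin n)) : Fin n × Fin n)
          ∈ (Finset.univ.erase iS).image (fun w : S => ((r2 w, (w : Fin n)) : Fin n × Fin n)) := by
        rw [← heq]
        exact (mem_PhiF φ i hi r1 _).mpr ⟨u, hu, rfl, rfl⟩
      obtain ⟨w, hw, hw1, hw2⟩ := (mem_PhiF φ i hi r2 _).mp this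
      have hwu : w = u := Subtype.ext hw2.symm
      have hw1' : r1 u = r2 w := hw1
      rw [hw1', hwu]
  · -- surjectivity
    intro F hF
    simp only [Finset.mem_inter, divForestsRootedAt, divForestsFromTo,
      Finset.mem_filter] at hF
    obtain ⟨⟨-, hforest, hroots⟩, -, -, hnoi, hpath⟩ := hF
    have hnoroot : ∀ v : Fin n, v ∈ insert i φ → ∀ a, (a, v) ∉ F := by
      intro v hv
      rw [← hroots] at hv
      simp only [rootSet, Finset.mem_filter] at hv
      exact hv.2
    have hex : ∀ u : S, u ≠ iS → ∃ a, (a, (↑u : Fin n)) ∈ F := by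
      intro u hu
      by_contra hno
      push_neg at hno
      have : (↑u : Fin n) ∈ rootSet F := by
        simp only [rootSet, Finset.mem_filter]
        exact ⟨Finset.mem_univ _, hno⟩
      rw [hroots, Finset.mem_insert] at this
      rcases this with h | h
      · exact hu (Subtype.ext h)
      · exact u.2 h
    have huniq : ∀ (b a a' : Fin n), (a, b) ∈ F → (a', b) ∈ F → a = a' := by
      intro b a a' ha ha'
      have h1 : (a, b) ∈ F.filter (fun p => p.2 = b) := Finset.mem_filter.mpr ⟨ha, rfl⟩
      have h2 : (a', b) ∈ F.filter (fun p => p.2 = b) := Finset.mem_filter.mpr ⟨ha', rfl⟩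
      have := Finset.card_le_one.mp (hforest.2.1 b) _ h1 _ h2
      exact congrArg Prod.fst this
    set r : S → Fin n := fun u => if hu : u = iS then i else Classical.choose (hex u hu)
      with hr
    have hrspec : ∀ u : S, (hu : u ≠ iS) → (r u, (↑u : Fin n)) ∈ F := by
      intro u hu
      rw [hr]
      simp only [dif_neg hu]
      exact Classical.choose_spec (hex u hu)
    have hriS : r iS = i := by rw [hr]; simp
    have hrP : r ∈ P := by
      rw [hP, Fintype.mem_piFinset]
      intro u
      by_cases hu : u = iS
      · rw [if_pos hu, Finset.mem_singleton, hu, hriS]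
      · rw [if_neg hu, Finset.mem_erase]
        exact ⟨hforest.1 _ (hrspec u hu), Finset.mem_univ _⟩
    have hFeq : (Finset.univ.erase iS).image
        (fun u : S => ((r u, (u : Fin n)) : Fin n × Fin n)) = F := by
      apply Finset.Subset.antisymm
      · intro p hp
        obtain ⟨u, hu, h1, h2⟩ := (mem_PhiF φ i hi r p).mp hp
        have : p = (r u, (↑u : Fin n)) := Prod.ext h1 h2
        rw [this]
        exact hrspec u hu
      · rintro ⟨a, b⟩ hab
        have hbφ : b ∉ φ := by
          intro hb
          exact hnoroot b (Finset.mem_insert_of_mem hb) a hab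
        have hbi : b ≠ i := by
          intro hb
          exact hnoi a (hb ▸ hab)
        have hu : (⟨b, hbφ⟩ : S) ≠ iS := fun hc => hbi (congrArg Subtype.val hc)
        have hra : r ⟨b, hbφ⟩ = a := huniq b _ _ (hrspec _ hu) hab
        exact (mem_PhiF φ i hi r _).mpr ⟨⟨b, hbφ⟩, hu, hra.symm, rfl⟩
    have hgood : Good r := by
      constructor
      · intro u hcyc
        have hFwd : ∀ x y : S, TransGen (auxStep iS (mainP φ r)) x y →
            TransGen (fun a b : Fin n => (a, b) ∈ F) ↑y ↑x := by
          intro x y hxy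
          induction hxy with
          | single h =>
            rename_i b
            rw [hstep_iff] at h
            refine TransGen.single ?_
            rw [← hFeq]
            exact (mem_PhiF φ i hi r _).mpr ⟨x, h.1, h.2.symm, rfl⟩
          | tail hxb hby ih =>
            rename_i b c
            refine TransGen.head ?_ ih
            rw [hstep_iff] at hby
            rw [← hFeq]
            exact (mem_PhiF φ i hi r _).mpr ⟨b, hby.1, hby.2.symm, rfl⟩
        exact hforest.2.2 ↑u (hFwd u u hcyc)
      · have hLift : ∀ y : Fin n, ReflTransGen (fun a b : Fin n => (a, b) ∈ F) i y →
            ∃ hy : y ∉ φ, ReflTransGen (auxStep iS (mainP φ r)) ⟨y, hy⟩ iS := by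
          intro y hy
          induction hy with
          | refl => exact ⟨hi, ReflTransGen.refl⟩
          | tail hib hbc ih =>
            rename_i b c
            obtain ⟨hb, hrt⟩ := ih
            have hbc' : (b, c) ∈ (Finset.univ.erase iS).image
                (fun u : S => ((r u, (u : Fin n)) : Fin n × Fin n)) := by rw [hFeq]; exact hbc
            obtain ⟨u, hu, h1, h2⟩ := (mem_PhiF φ i hi r _).mp hbc'
            have hcφ : c ∉ φ := by have h2' : c = (↑u : Fin n) := h2; rw [h2']; exact u.2
            have hcu : (⟨c, hcφ⟩ : S) = u := Subtype.ext h2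
            refine ⟨hcφ, ReflTransGen.head ?_ hrt⟩
            rw [hstep_iff, hcu]
            exact ⟨hu, h1.symm⟩
        obtain ⟨hjφ, hrt⟩ := hLift j hpath
        have : (⟨j, hjφ⟩ : S) = jS := Subtype.ext rfl
        rw [← this]
        exact hrt
    refine ⟨r, Finset.mem_filter.mpr ⟨hrP, hgood⟩, hFeq⟩
  · -- weights agree
    intro r hr
    rw [arcWt, Finset.prod_image]
    intro u hu w hw huw
    exact Subtype.ext (congrArg Prod.snd huw)

end Main
end

section
/- Maybee's cofactor-path expansion (equation (4)). Let U = (u_{ab}) be an n×n real matrix and let i ≠ j be indices in {1,…,n}. Then U^{ij} = ∑_P [∏_{t=1}^m (−u_{v_t v_{t−1}})] · det U_{−ψ_P}, where the sum is over all sequences P : i = v_0, v_1, …, v_m = j (m ≥ 1) of distinct indices (directed paths from i to j in the weighted digraph Γ(U) in which the arc from a to b carries weight −u_{ba}), ψ_P = {v_0, v_1, …, v_m}, and U_{−ψ_P} is the matrix obtained from U by deleting the rows and columns indexed by ψ_P. -/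
open scoped Classical

/-- The cofactor of the `(i,j)` entry of `M`: `(-1)^(i+j)` times the determinant of the
matrix obtained from `M` by deleting row `i` and column `j`. -/
noncomputable def cofactor {m : ℕ} (M : Matrix (Fin (m + 1)) (Fin (m + 1)) ℝ)
    (i j : Fin (m + 1)) : ℝ :=
  (-1 : ℝ) ^ ((i : ℕ) + (j : ℕ)) * (M.submatrix i.succAbove j.succAbove).det

open Equiv Finset Matrix

set_option linter.unusedSectionVars false
variable {α : Type*} [Fintype α] [DecidableEq α]

lemma my_prod_map_neg {β : Type*} (l : List β) (g : β → ℝ) :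
    (l.map fun a => -g a).prod = (-1 : ℝ) ^ l.length * (l.map g).prod := by
  induction l with
  | nil => simp
  | cons a l ih => simp only [List.map_cons, List.prod_cons, List.length_cons, ih, pow_succ]; ring

lemma my_toList_congr (p q : Equiv.Perm α) (x : α) (h : p.cycleOf x = q.cycleOf x) :
    p.toList x = q.toList x := by
  unfold Equiv.Perm.toList
  rw [h]
  refine List.ext_getElem (by simp) fun k _ _ => ?_
  simp only [List.getElem_iterate, ← Equiv.Perm.coe_pow]
  rw [← Equiv.Perm.cycleOf_pow_apply_self p x k, ← Equiv.Perm.cycleOf_pow_apply_self q x k, h]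

section build

variable (l : List α) (τ : Equiv.Perm {v : α // v ∉ l.toFinset})

noncomputable def buildPerm : Equiv.Perm α := l.formPerm * Equiv.Perm.ofSubtype τ

lemma buildPerm_apply_of_mem {v : α} (hv : v ∈ l) : buildPerm l τ v = l.formPerm v := by
  unfold buildPerm
  rw [Equiv.Perm.mul_apply, Equiv.Perm.ofSubtype_apply_of_not_mem]
  simpa using hv

lemma buildPerm_apply_of_not_mem {v : α} (hv : v ∉ l) :
    buildPerm l τ v = (τ ⟨v, by simpa using hv⟩ : α) := by
  unfold buildPerm
  rw [Equiv.Perm.mul_apply, Equiv.Perm.ofSubtype_apply_of_mem τ (by simpa using hv),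
    List.formPerm_apply_of_notMem (by simpa using (τ ⟨v, by simpa using hv⟩).2)]

variable {l}

lemma buildPerm_cycleOf (hnd : l.Nodup) (h2 : 2 ≤ l.length) {i : α} (hi : i ∈ l) :
    (buildPerm l τ).cycleOf i = l.formPerm := by
  have hcyc : l.formPerm.IsCycle := List.isCycle_formPerm hnd h2
  have hsupp : l.formPerm.support = l.toFinset := by
    refine List.support_formPerm_of_nodup l hnd fun x hx => ?_
    subst hx; simp at h2
  have hdisj : l.formPerm.Disjoint (Equiv.Perm.ofSubtype τ) := by
    intro v
    by_cases hv : v ∈ l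
    · exact Or.inr (Equiv.Perm.ofSubtype_apply_of_not_mem τ (by simpa using hv))
    · exact Or.inl (List.formPerm_apply_of_notMem hv)
  have hfix : Equiv.Perm.ofSubtype τ i = i :=
    Equiv.Perm.ofSubtype_apply_of_not_mem τ (by simpa using hi)
  have hne : l.formPerm i ≠ i := by
    have : i ∈ l.formPerm.support := by rw [hsupp]; simpa using hi
    exact Equiv.Perm.mem_support.mp this
  rw [buildPerm, Equiv.Perm.cycleOf_mul_of_apply_right_eq_self hdisj.commute i hfix,
    hcyc.cycleOf_eq hne]

lemma buildPerm_toList (hnd : l.Nodup) (h2 : 2 ≤ l.length) {i : α} (hhead : l.head? = some i) :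
    (buildPerm l τ).toList i = l := by
  have hi : i ∈ l := by
    cases l with
    | nil => simp at hhead
    | cons a xs => simp_all
  have hcyc : l.formPerm.IsCycle := List.isCycle_formPerm hnd h2
  have hne : l.formPerm i ≠ i := by
    have hsupp : l.formPerm.support = l.toFinset := by
      refine List.support_formPerm_of_nodup l hnd fun x hx => ?_
      subst hx; simp at h2
    have : i ∈ l.formPerm.support := by rw [hsupp]; simpa using hi
    exact Equiv.Perm.mem_support.mp this
  rw [my_toList_congr (buildPerm l τ) l.formPerm i
    ((buildPerm_cycleOf τ hnd h2 hi).trans (hcyc.cycleOf_eq hne).symm)]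
  have h0 : l.get ⟨0, by omega⟩ = i := by
    cases l with
    | nil => simp at hhead
    | cons a xs => simp_all [List.get]
  rw [← h0]
  exact Equiv.Perm.toList_formPerm_nontrivial l h2 hnd

lemma buildPerm_last (hnd : l.Nodup) (h2 : 2 ≤ l.length) {i j : α}
    (hhead : l.head? = some i) (hlast : l.getLast? = some j) : buildPerm l τ j = i := by
  have hne : l ≠ [] := by rintro rfl; simp at h2
  have hj : j = l.getLast hne := by
    rw [List.getLast?_eq_getLast hne] at hlast; exact (Option.some_injective _ hlast).symm
  have hjl : j ∈ l := hj ▸ List.getLast_mem hne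
  rw [buildPerm_apply_of_mem l τ hjl]
  cases l with
  | nil => simp at h2
  | cons a xs =>
    have ha : a = i := by simpa using hhead
    rw [hj]
    rw [List.formPerm_apply_getLast]
    exact ha

end build

section decomp

variable (σ : Equiv.Perm α) {i j : α}

lemma decomp_mem_support (hσ : σ j = i) (hij : i ≠ j) : i ∈ σ.support := by
  rw [Equiv.Perm.mem_support]
  intro h
  exact hij (σ.injective (hσ.trans h.symm) ).symm

lemma decomp_mem_toList_iff (hσ : σ j = i) (hij : i ≠ j) (v : α) :
    v ∈ σ.toList i ↔ σ.SameCycle i v := by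
  rw [Equiv.Perm.mem_toList_iff, and_iff_left (decomp_mem_support σ hσ hij)]

lemma decomp_length (hσ : σ j = i) (hij : i ≠ j) : 2 ≤ (σ.toList i).length :=
  Equiv.Perm.two_le_length_toList_iff_mem_support.mpr (decomp_mem_support σ hσ hij)

lemma decomp_head (hσ : σ j = i) (hij : i ≠ j) : (σ.toList i).head? = some i := by
  have h2 := decomp_length σ hσ hij
  have hpos : 0 < (σ.toList i).length := by omega
  rw [List.head?_eq_getElem?, List.getElem?_eq_getElem hpos]
  have h0 := Equiv.Perm.getElem_toList σ i 0 hpos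
  simpa using h0

lemma decomp_sameCycle (hσ : σ j = i) : σ.SameCycle i j :=
  Equiv.Perm.SameCycle.symm ⟨1, by simpa using hσ⟩

lemma formPerm_getLast' (l : List α) (hne : l ≠ []) :
    l.formPerm (l.getLast hne) = l.head hne := by
  cases l with
  | nil => exact absurd rfl hne
  | cons a xs => simpa using List.formPerm_apply_getLast a xs

lemma decomp_last (hσ : σ j = i) (hij : i ≠ j) : (σ.toList i).getLast? = some j := by
  have h2 := decomp_length σ hσ hij
  have hne : σ.toList i ≠ [] := by
    intro h; rw [h] at h2; simp at h2
  have hform : (σ.toList i).formPerm = σ.cycleOf i := Equiv.Perm.formPerm_toList σ i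
  have hj : (σ.toList i).formPerm j = i := by
    rw [hform, Equiv.Perm.cycleOf_apply, if_pos (decomp_sameCycle σ hσ), hσ]
  have hy : (σ.toList i).formPerm ((σ.toList i).getLast hne) = i := by
    rw [formPerm_getLast']
    have hh := decomp_head σ hσ hij
    rw [List.head?_eq_head hne] at hh
    exact Option.some_injective _ hh
  have : (σ.toList i).getLast hne = j := (σ.toList i).formPerm.injective (hy.trans hj.symm)
  rw [List.getLast?_eq_getLast hne, this]

lemma decomp_invariant (hσ : σ j = i) (hij : i ≠ j) (v : α) :
    v ∉ (σ.toList i).toFinset ↔ σ v ∉ (σ.toList i).toFinset := by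
  suffices h : v ∈ σ.toList i ↔ σ v ∈ σ.toList i by
    constructor <;> intro hv hc <;> [exact hv (by simpa using h.mpr (by simpa using hc));
      exact hv (by simpa using h.mp (by simpa using hc))]
  rw [decomp_mem_toList_iff σ hσ hij, decomp_mem_toList_iff σ hσ hij,
    Equiv.Perm.sameCycle_apply_right]

noncomputable def decompPerm (hσ : σ j = i) (hij : i ≠ j) :
    Equiv.Perm {v : α // v ∉ (σ.toList i).toFinset} :=
  σ.subtypePerm fun v => (decomp_invariant σ hσ hij v).symm

lemma build_decomp (hσ : σ j = i) (hij : i ≠ j) :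
    buildPerm (σ.toList i) (decompPerm σ hσ hij) = σ := by
  ext v
  by_cases hv : v ∈ σ.toList i
  · rw [buildPerm_apply_of_mem _ _ hv, Equiv.Perm.formPerm_toList, Equiv.Perm.cycleOf_apply,
      if_pos ((decomp_mem_toList_iff σ hσ hij v).mp hv)]
  · rw [buildPerm_apply_of_not_mem _ _ hv]
    rfl

end decomp

section more

variable {l : List α} (τ : Equiv.Perm {v : α // v ∉ l.toFinset})

lemma buildPerm_sign (hnd : l.Nodup) (h2 : 2 ≤ l.length) :
    Equiv.Perm.sign (buildPerm l τ) = (-(-1) ^ l.length) * Equiv.Perm.sign τ := by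
  have hsupp : l.formPerm.support = l.toFinset := by
    refine List.support_formPerm_of_nodup l hnd fun x hx => ?_
    subst hx; simp at h2
  rw [buildPerm, Equiv.Perm.sign_mul, Equiv.Perm.sign_ofSubtype]
  congr 1
  rw [(List.isCycle_formPerm hnd h2).sign, hsupp, List.toFinset_card_of_nodup hnd]

lemma zip_map_eq (f : α → α → ℝ) (hnd : l.Nodup) :
    (l.zip l.tail).map (fun p : α × α => f p.2 p.1)
      = l.dropLast.map fun a => f (l.formPerm a) a := by
  apply List.ext_getElem
  · simp [List.length_zip]
  · intro k h1 h2
    simp only [List.length_map, List.length_zip, List.length_tail] at h1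
    have hk : k + 1 < l.length := by omega
    simp only [List.getElem_map, List.getElem_zip, List.getElem_tail, List.getElem_dropLast]
    rw [List.formPerm_apply_lt_getElem l hnd k hk]

lemma erase_toFinset_eq {j : α} (hnd : l.Nodup) (hne : l ≠ []) (hlast : l.getLast? = some j) :
    Finset.univ.erase j = l.dropLast.toFinset ∪ l.toFinsetᶜ := by
  have hj : j = l.getLast hne := by
    rw [List.getLast?_eq_getLast hne] at hlast; exact (Option.some_injective _ hlast).symm
  have hsplit : l.dropLast ++ [j] = l := by rw [hj]; exact List.dropLast_append_getLast hne
  have hnd' : (l.dropLast ++ [j]).Nodup := by rw [hsplit]; exact hnd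
  have hjd : j ∉ l.dropLast := by
    have := (List.nodup_append'.mp hnd').2.2
    intro h; exact this h (by simp)
  have hjl : j ∈ l := by rw [← hsplit]; simp
  have hmem : ∀ a : α, a ∈ l ↔ a ∈ l.dropLast ∨ a = j := by
    intro a; rw [← hsplit]; simp
  ext a
  simp only [Finset.mem_erase, Finset.mem_univ, and_true, Finset.mem_union, Finset.mem_compl,
    List.mem_toFinset]
  constructor
  · intro ha
    by_cases h : a ∈ l
    · exact Or.inl (((hmem a).mp h).resolve_right ha)
    · exact Or.inr h
  · rintro (h | h)
    · intro hc; subst hc; exact hjd h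
    · intro hc; subst hc; exact h hjl

lemma sigma_ext (l₁ l₂ : List α) (hn₁ : l₁.Nodup) (hn₂ : l₂.Nodup) (h : l₁ = l₂)
    (τ₁ : Equiv.Perm {v : α // v ∉ l₁.toFinset}) (τ₂ : Equiv.Perm {v : α // v ∉ l₂.toFinset})
    (h2 : ∀ v (hv₁ : v ∉ l₁.toFinset) (hv₂ : v ∉ l₂.toFinset), (τ₁ ⟨v, hv₁⟩ : α) = τ₂ ⟨v, hv₂⟩) :
    (⟨⟨l₁, hn₁⟩, τ₁⟩ : Σ L : {l : List α // l.Nodup}, Equiv.Perm {v : α // v ∉ L.1.toFinset})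
      = ⟨⟨l₂, hn₂⟩, τ₂⟩ := by
  subst h
  have hτ : τ₁ = τ₂ := by
    apply Equiv.ext
    rintro ⟨v, hv⟩
    exact Subtype.ext (h2 v hv hv)
  subst hτ
  rfl

end more

lemma key_summand (U : Matrix α α ℝ) {j : α} {l : List α}
    (hnd : l.Nodup) (h2 : 2 ≤ l.length) (hlast : l.getLast? = some j)
    (τ : Equiv.Perm {v : α // v ∉ l.toFinset}) :
    ((l.zip l.tail).map fun p : α × α => -U p.2 p.1).prod *
      (((Equiv.Perm.sign τ : ℤ) : ℝ) * ∏ v : {v : α // v ∉ l.toFinset}, U ↑(τ v) ↑v)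
    = ((Equiv.Perm.sign (buildPerm l τ) : ℤ) : ℝ)
        * ∏ a ∈ Finset.univ.erase j, U (buildPerm l τ a) a := by
  have hne : l ≠ [] := by rintro rfl; simp at h2
  have hndd : l.dropLast.Nodup := hnd.sublist (List.dropLast_sublist l)
  -- sign
  have hsign : ((Equiv.Perm.sign (buildPerm l τ) : ℤ) : ℝ)
      = (-(-1 : ℝ) ^ l.length) * ((Equiv.Perm.sign τ : ℤ) : ℝ) := by
    rw [buildPerm_sign τ hnd h2]
    push_cast
    ring
  -- product split
  have hset := erase_toFinset_eq (j := j) hnd hne hlast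
  have hdisj : Disjoint l.dropLast.toFinset l.toFinsetᶜ := by
    refine Disjoint.mono_left ?_ disjoint_compl_right
    intro a ha
    simp only [List.mem_toFinset] at ha ⊢
    exact (List.dropLast_sublist l).mem ha
  have hsplit : ∏ a ∈ Finset.univ.erase j, U (buildPerm l τ a) a
      = (∏ a ∈ l.dropLast.toFinset, U (buildPerm l τ a) a)
        * ∏ a ∈ l.toFinsetᶜ, U (buildPerm l τ a) a := by
    rw [hset, Finset.prod_union hdisj]
  -- part 1 : over the path
  have hpart1 : ∏ a ∈ l.dropLast.toFinset, U (buildPerm l τ a) a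
      = (l.dropLast.map fun a => U (l.formPerm a) a).prod := by
    rw [List.prod_toFinset _ hndd]
    refine congrArg List.prod (List.map_congr_left fun a ha => ?_)
    rw [buildPerm_apply_of_mem l τ ((List.dropLast_sublist l).mem ha)]
  -- part 2 : over the complement
  have hpart2 : ∏ a ∈ l.toFinsetᶜ, U (buildPerm l τ a) a
      = ∏ v : {v : α // v ∉ l.toFinset}, U ↑(τ v) ↑v := by
    rw [Finset.prod_subtype (p := fun v : α => v ∉ l.toFinset) l.toFinsetᶜ (by simp)
      (fun a => U (buildPerm l τ a) a)]
    refine Finset.prod_congr rfl fun v _ => ?_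
    rw [buildPerm_apply_of_not_mem l τ (by simpa using v.2)]
  -- the path weight
  have hw : ((l.zip l.tail).map fun p : α × α => -U p.2 p.1).prod
      = (-1 : ℝ) ^ (l.length - 1) * (l.dropLast.map fun a => U (l.formPerm a) a).prod := by
    have := zip_map_eq (l := l) (fun b a => -U b a) hnd
    rw [this]
    have := my_prod_map_neg l.dropLast (fun a => U (l.formPerm a) a)
    rw [this, List.length_dropLast]
  have hpow : -(-1 : ℝ) ^ l.length = (-1 : ℝ) ^ (l.length - 1) := by
    obtain ⟨m, hm⟩ : ∃ m, l.length = m + 1 := ⟨l.length - 1, by omega⟩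
    rw [hm, pow_succ, Nat.add_sub_cancel]
    ring
  rw [hsplit, hpart1, hpart2, hw, hsign, hpow]
  ring

lemma cofactor_eq_sum_perm {n : ℕ} (U : Matrix (Fin (n+1)) (Fin (n+1)) ℝ) (i j : Fin (n+1)) :
    cofactor U i j =
      ∑ σ ∈ Finset.univ.filter (fun σ : Equiv.Perm (Fin (n+1)) => σ j = i),
        ((Equiv.Perm.sign σ : ℤ) : ℝ) * ∏ a ∈ Finset.univ.erase j, U (σ a) a := by
  have h1 : cofactor U i j = (U.updateRow i (Pi.single j 1)).det := by
    rw [← Matrix.adjugate_apply, Matrix.adjugate_fin_succ_eq_det_submatrix, cofactor]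
  rw [h1, Matrix.det_apply', ← Finset.sum_filter_add_sum_filter_not Finset.univ
    (fun σ : Equiv.Perm (Fin (n+1)) => σ j = i)]
  have h2 : ∀ σ ∈ Finset.univ.filter (fun σ : Equiv.Perm (Fin (n+1)) => ¬ σ j = i),
      ((Equiv.Perm.sign σ : ℤ) : ℝ) * ∏ a, (U.updateRow i (Pi.single j 1)) (σ a) a = 0 := by
    intro σ hσ
    rw [Finset.mem_filter] at hσ
    have ha0 : σ (σ⁻¹ i) = i := Equiv.apply_symm_apply σ i
    have h3 : (U.updateRow i (Pi.single j 1)) (σ (σ⁻¹ i)) (σ⁻¹ i) = 0 := by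
      rw [ha0, Matrix.updateRow_self]
      have : σ⁻¹ i ≠ j := by
        intro h; apply hσ.2; rw [← h, ha0]
      rw [Pi.single_apply, if_neg this]
    rw [Finset.prod_eq_zero (f := fun a => (U.updateRow i (Pi.single j 1)) (σ a) a)
      (Finset.mem_univ (σ⁻¹ i)) h3, mul_zero]
  rw [Finset.sum_eq_zero h2, add_zero]
  refine Finset.sum_congr rfl fun σ hσ => ?_
  rw [Finset.mem_filter] at hσ
  congr 1
  rw [← Finset.mul_prod_erase Finset.univ _ (Finset.mem_univ j), hσ.2,
    Matrix.updateRow_self, Pi.single_eq_same, one_mul]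
  refine Finset.prod_congr rfl fun a ha => ?_
  have haj : a ≠ j := (Finset.mem_erase.mp ha).1
  have : σ a ≠ i := fun h => haj (σ.injective (h.trans hσ.2.symm))
  rw [Matrix.updateRow_apply, if_neg this]

/-- **Maybee's cofactor-path expansion** (equation (4)). For `i ≠ j`,
`U^{ij} = ∑_P ε(P) ⬝ det U_{−ψ_P}`, the sum being over all directed paths
`P : i = v_0, v_1, …, v_m = j` (`m ≥ 1`, vertices distinct) in the digraph `Γ(U)` in
which the arc from `a` to `b` carries weight `−u_{ba}`; `ψ_P` is the vertex set of `P`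
and `U_{−ψ_P}` is obtained from `U` by deleting the rows and columns indexed by `ψ_P`. -/
theorem maybee_cofactor_expansion (n : ℕ) (U : Matrix (Fin (n + 1)) (Fin (n + 1)) ℝ)
    (i j : Fin (n + 1)) (hij : i ≠ j) :
    cofactor U i j
      = ∑ l ∈ Finset.univ.filter
            (fun l : {l : List (Fin (n + 1)) // l.Nodup} =>
              2 ≤ l.1.length ∧ l.1.head? = some i ∧ l.1.getLast? = some j),
          ((l.1.zip l.1.tail).map fun p => - U p.2 p.1).prod *
            (U.submatrix
              (fun v : {v : Fin (n + 1) // v ∉ l.1.toFinset} => (v : Fin (n + 1)))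
              (fun v : {v : Fin (n + 1) // v ∉ l.1.toFinset} => (v : Fin (n + 1)))).det := by
  rw [cofactor_eq_sum_perm U i j]
  set S := Finset.univ.filter
      (fun l : {l : List (Fin (n + 1)) // l.Nodup} =>
        2 ≤ l.1.length ∧ l.1.head? = some i ∧ l.1.getLast? = some j) with hS
  have hdet : ∀ L : {l : List (Fin (n + 1)) // l.Nodup},
      (U.submatrix
        (fun v : {v : Fin (n + 1) // v ∉ L.1.toFinset} => (v : Fin (n + 1)))
        (fun v : {v : Fin (n + 1) // v ∉ L.1.toFinset} => (v : Fin (n + 1)))).det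
      = ∑ τ : Equiv.Perm {v : Fin (n + 1) // v ∉ L.1.toFinset},
          ((Equiv.Perm.sign τ : ℤ) : ℝ) * ∏ v, U ↑(τ v) ↑v := by
    intro L
    rw [Matrix.det_apply']
    refine Finset.sum_congr rfl fun τ _ => ?_
    simp [Matrix.submatrix_apply]
  have hrhs : (∑ l ∈ S, ((l.1.zip l.1.tail).map fun p => - U p.2 p.1).prod *
            (U.submatrix
              (fun v : {v : Fin (n + 1) // v ∉ l.1.toFinset} => (v : Fin (n + 1)))
              (fun v : {v : Fin (n + 1) // v ∉ l.1.toFinset} => (v : Fin (n + 1)))).det)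
      = ∑ x ∈ S.sigma (fun L => (Finset.univ :
            Finset (Equiv.Perm {v : Fin (n + 1) // v ∉ L.1.toFinset}))),
          ((x.1.1.zip x.1.1.tail).map fun p => - U p.2 p.1).prod *
            (((Equiv.Perm.sign x.2 : ℤ) : ℝ) * ∏ v, U ↑(x.2 v) ↑v) := by
    rw [Finset.sum_sigma]
    refine Finset.sum_congr rfl fun L _ => ?_
    rw [hdet L, Finset.mul_sum]
  rw [hrhs]
  symm
  refine Finset.sum_bij' (fun x _ => buildPerm x.1.1 x.2)
    (fun σ hσ => ⟨⟨σ.toList i, σ.nodup_toList i⟩,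
      decompPerm σ (Finset.mem_filter.mp hσ).2 hij⟩) ?_ ?_ ?_ ?_ ?_
  · -- membership of buildPerm
    rintro ⟨⟨l, hnd⟩, τ⟩ hx
    obtain ⟨hl, -⟩ := Finset.mem_sigma.mp hx
    rw [hS, Finset.mem_filter] at hl
    obtain ⟨-, h2, hhead, hlast⟩ := hl
    exact Finset.mem_filter.mpr ⟨Finset.mem_univ _, buildPerm_last τ hnd h2 hhead hlast⟩
  · -- membership of decomposition
    intro σ hσ
    have hσ' := (Finset.mem_filter.mp hσ).2
    refine Finset.mem_sigma.mpr ⟨?_, Finset.mem_univ _⟩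
    rw [hS, Finset.mem_filter]
    exact ⟨Finset.mem_univ _, decomp_length σ hσ' hij, decomp_head σ hσ' hij,
      decomp_last σ hσ' hij⟩
  · -- left inverse
    rintro ⟨⟨l, hnd⟩, τ⟩ hx
    obtain ⟨hl, -⟩ := Finset.mem_sigma.mp hx
    rw [hS, Finset.mem_filter] at hl
    obtain ⟨-, h2, hhead, hlast⟩ := hl
    refine sigma_ext _ _ _ _ (buildPerm_toList τ hnd h2 hhead) _ _ fun v hv1 hv2 => ?_
    exact buildPerm_apply_of_not_mem l τ (by simpa using hv2)
  · -- right inverse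
    intro σ hσ
    exact build_decomp σ (Finset.mem_filter.mp hσ).2 hij
  · -- summand equality
    rintro ⟨⟨l, hnd⟩, τ⟩ hx
    obtain ⟨hl, -⟩ := Finset.mem_sigma.mp hx
    rw [hS, Finset.mem_filter] at hl
    obtain ⟨-, h2, hhead, hlast⟩ := hl
    exact key_summand U hnd h2 hlast τ
end

section
/- Forest expansion of the adjugate of the Laplacian characteristic matrix (Remark). Let Γ be a weighted digraph on a finite vertex set V = {1,…,n} and let i, j ∈ V. Then the cofactor of the (i,j) entry of the characteristic matrix λI − L(Γ) equals ∑_{φ⊆V∖{i,j}} λ^{|φ|} ∑_{F∈𝔉_{φ∪{i}}^{i→j}} (−1)^{d(F)} ε(F), where d(F) is the number of arcs of F; i.e., this expansion is obtained from the expansion of the cofactors of λI + L(Γ) by replacing each forest weight ε(F) by (−1)^{d(F)} ε(F). -/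
open scoped Classical

open Finset Matrix Relation

section Core
variable {α : Type*} [Fintype α] [DecidableEq α]
set_option linter.unusedSectionVars false

/-- arc relation of a choice function: `a` is the chosen parent of `b`. -/
def arcR (r : α → Option α) (a b : α) : Prop := r b = some a

noncomputable def baseRow (r : α → Option α) (b : α) : α → ℝ :=
  Pi.single b 1 - (r b).elim 0 (fun a => Pi.single a 1)

noncomputable def rowMat (i j : α) (r : α → Option α) : Matrix α α ℝ :=
  Matrix.of fun b => if b = i then Pi.single j 1 else baseRow r b

noncomputable def depthF (r : α → Option α) (b : α) : ℕ :=
  (Finset.univ.filter fun a => Relation.TransGen (arcR r) a b).card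

lemma depthF_lt {r : α → Option α} (hac : ∀ a, ¬ Relation.TransGen (arcR r) a a)
    {a b : α} (hab : r b = some a) : depthF r a < depthF r b := by
  apply Finset.card_lt_card
  have hsub : (Finset.univ.filter fun x => Relation.TransGen (arcR r) x a) ⊆
      (Finset.univ.filter fun x => Relation.TransGen (arcR r) x b) := by
    intro x hx
    simp only [Finset.mem_filter, Finset.mem_univ, true_and] at hx ⊢
    exact hx.tail hab
  rw [Finset.ssubset_iff_of_subset hsub]
  refine ⟨a, ?_, ?_⟩
  · simp only [Finset.mem_filter, Finset.mem_univ, true_and]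
    exact Relation.TransGen.single hab
  · simp only [Finset.mem_filter, Finset.mem_univ, true_and]
    exact hac a

lemma baseRow_diag {r : α → Option α} (hac : ∀ a, ¬ Relation.TransGen (arcR r) a a)
    (b : α) : baseRow r b b = 1 := by
  unfold baseRow
  cases hrb : r b with
  | none => simp
  | some a =>
    have hab : a ≠ b := by
      rintro rfl
      exact hac a (Relation.TransGen.single hrb)
    simp [Pi.single_eq_of_ne hab.symm]

lemma det_baseMat {r : α → Option α} (hac : ∀ a, ¬ Relation.TransGen (arcR r) a a) :
    (Matrix.of (baseRow r)).det = 1 := by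
  rw [Matrix.det_apply]
  rw [Finset.sum_eq_single (1 : Equiv.Perm α)]
  · simp only [Equiv.Perm.sign_one, one_smul, Equiv.Perm.one_apply]
    rw [Finset.prod_eq_one]
    intro b _
    exact baseRow_diag hac b
  · intro σ _ hσ
    have hprod : (∏ b, Matrix.of (baseRow r) (σ b) b) = 0 := by
      by_contra hne
      have hfac : ∀ b, baseRow r (σ b) b ≠ 0 := by
        intro b hb
        exact hne (Finset.prod_eq_zero (Finset.mem_univ b) hb)
      have hstep : ∀ b, σ b = b ∨ depthF r b < depthF r (σ b) := by
        intro b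
        have := hfac b
        unfold baseRow at this
        cases hrb : r (σ b) with
        | none =>
          left
          rw [hrb] at this
          simp only [Option.elim, sub_zero] at this
          by_contra hbc
          exact this (Pi.single_eq_of_ne (fun h => hbc h.symm) 1)
        | some a =>
          rw [hrb] at this
          by_cases hbb : σ b = b
          · exact Or.inl hbb
          · right
            have hba : b = a := by
              by_contra hba
              apply this
              simp only [Pi.sub_apply, Option.elim]
              rw [Pi.single_eq_of_ne (fun h => hbb h.symm) , Pi.single_eq_of_ne (fun h => hba h)]
              ring
            exact depthF_lt hac (hba ▸ hrb)
      have hne1 : ∃ b, σ b ≠ b := by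
        by_contra hall
        push_neg at hall
        exact hσ (Equiv.ext hall)
      obtain ⟨b₀, hb₀⟩ := hne1
      have hlt : ∑ b, depthF r b < ∑ b, depthF r (σ b) := by
        apply Finset.sum_lt_sum
        · intro b _
          rcases hstep b with h | h
          · rw [h]
          · exact le_of_lt h
        · exact ⟨b₀, Finset.mem_univ b₀, (hstep b₀).resolve_left hb₀⟩
      rw [Equiv.sum_comp σ (depthF r)] at hlt
      exact lt_irrefl _ hlt
    rw [hprod, smul_zero]
  · intro h
    exact absurd (Finset.mem_univ _) h

lemma vecMul_eq_sum_rows (v : α → ℝ) (M : Matrix α α ℝ) :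
    v ᵥ* M = ∑ b, v b • M b := by
  ext c
  simp [Matrix.vecMul, dotProduct, Finset.sum_apply]

/-- telescoping along a downward chain (arcs of the forest) -/
lemma count_smul_baseRow {r : α → Option α} :
    ∀ (l : List α) (x : α), List.Chain (fun u v => r v = some u) x l →
      ∑ b, (l.count b : ℝ) • baseRow r b =
        Pi.single ((x :: l).getLast (List.cons_ne_nil x l)) 1 - Pi.single x 1 := by
  intro l
  induction l with
  | nil => intro x _; simp
  | cons y l ih =>
    intro x hch
    change List.IsChain _ (x :: y :: l) at hch
    rw [List.chain_cons] at hch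
    have hy : baseRow r y = Pi.single y 1 - Pi.single x 1 := by
      unfold baseRow; rw [hch.1]; rfl
    have hrec := ih y hch.2
    have hcount : ∀ b : α, ((y :: l).count b : ℝ) = (l.count b : ℝ) + (if b = y then 1 else 0) := by
      intro b
      rw [List.count_cons]
      push_cast
      by_cases hb : b = y
      · subst hb; simp
      · simp [hb, Ne.symm hb]
    calc ∑ b, ((y :: l).count b : ℝ) • baseRow r b
        = ∑ b, ((l.count b : ℝ) • baseRow r b + (if b = y then (1:ℝ) else 0) • baseRow r b) := by
          apply Finset.sum_congr rfl; intro b _; rw [hcount b, add_smul]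
      _ = (∑ b, (l.count b : ℝ) • baseRow r b) + ∑ b, (if b = y then (1:ℝ) else 0) • baseRow r b := by
          rw [Finset.sum_add_distrib]
      _ = (Pi.single ((y :: l).getLast (List.cons_ne_nil y l)) 1 - Pi.single y 1) + baseRow r y := by
          rw [hrec]; congr 1
          rw [Finset.sum_eq_single y]
          · simp
          · intro b _ hb; simp [hb]
          · intro h; exact absurd (Finset.mem_univ y) h
      _ = Pi.single ((x :: y :: l).getLast (List.cons_ne_nil x (y :: l))) 1 - Pi.single x 1 := by
          rw [hy, List.getLast_cons (List.cons_ne_nil y l)]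
          abel

/-- telescoping along an upward chain (towards the root) -/
lemma count_smul_baseRow_up {r : α → Option α} :
    ∀ (l : List α) (x : α), List.Chain (fun u v => r u = some v) x l →
      ∑ b, (((x :: l).dropLast.count b : ℝ)) • baseRow r b =
        Pi.single x 1 - Pi.single ((x :: l).getLast (List.cons_ne_nil x l)) 1 := by
  intro l
  induction l with
  | nil => intro x _; simp
  | cons y l ih =>
    intro x hch
    change List.IsChain _ (x :: y :: l) at hch
    rw [List.chain_cons] at hch
    have hx : baseRow r x = Pi.single x 1 - Pi.single y 1 := by
      unfold baseRow; rw [hch.1]; rfl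
    have hrec := ih y hch.2
    have hdl : (x :: y :: l).dropLast = x :: (y :: l).dropLast := by
      simp [List.dropLast]
    have hcount : ∀ b : α, (((x :: y :: l).dropLast.count b : ℝ))
        = ((y :: l).dropLast.count b : ℝ) + (if b = x then 1 else 0) := by
      intro b
      rw [hdl, List.count_cons]
      push_cast
      by_cases hb : b = x
      · subst hb; simp
      · simp [hb, Ne.symm hb]
    calc ∑ b, (((x :: y :: l).dropLast.count b : ℝ)) • baseRow r b
        = ∑ b, (((y :: l).dropLast.count b : ℝ) • baseRow r b + (if b = x then (1:ℝ) else 0) • baseRow r b) := by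
          apply Finset.sum_congr rfl; intro b _; rw [hcount b, add_smul]
      _ = (∑ b, ((y :: l).dropLast.count b : ℝ) • baseRow r b) + ∑ b, (if b = x then (1:ℝ) else 0) • baseRow r b := by
          rw [Finset.sum_add_distrib]
      _ = (Pi.single y 1 - Pi.single ((y :: l).getLast (List.cons_ne_nil y l)) 1) + baseRow r x := by
          rw [hrec]; congr 1
          rw [Finset.sum_eq_single x]
          · simp
          · intro b _ hb; simp [hb]
          · intro h; exact absurd (Finset.mem_univ x) h
      _ = Pi.single x 1 - Pi.single ((x :: y :: l).getLast (List.cons_ne_nil x (y :: l))) 1 := by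
          rw [hx, List.getLast_cons (List.cons_ne_nil y l)]
          abel

lemma rowMat_row_ne {i j : α} {r : α → Option α} {b : α} (hb : b ≠ i) :
    rowMat i j r b = baseRow r b := by
  rw [show rowMat i j r b = if b = i then Pi.single j 1 else baseRow r b from rfl, if_neg hb]

lemma rowMat_row_i {i j : α} {r : α → Option α} : rowMat i j r i = Pi.single j 1 := by
  rw [show rowMat i j r i = if i = i then Pi.single j 1 else baseRow r i from rfl, if_pos rfl]

lemma chain_concat' {R : α → α → Prop} :
    ∀ (l : List α) (x c : α), List.Chain R x l →
      R ((x :: l).getLast (List.cons_ne_nil x l)) c → List.Chain R x (l ++ [c]) := by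
  intro l
  induction l with
  | nil => intro x c _ h; simpa using List.Chain.cons (by simpa using h) List.Chain.nil
  | cons y l ih =>
    intro x c hch hl
    change List.IsChain _ (x :: y :: l) at hch
    rw [List.chain_cons] at hch
    rw [List.getLast_cons (List.cons_ne_nil y l)] at hl
    exact List.chain_cons.mpr ⟨hch.1, ih y c hch.2 hl⟩

/-- members of a chain list are all "heads" (have a chosen parent) -/
lemma chain_mem_some {r : α → Option α} :
    ∀ (l : List α) (x : α), List.Chain (fun u v => r v = some u) x l →
      ∀ b ∈ l, ∃ a, r b = some a := by
  intro l
  induction l with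
  | nil => intro x _ b hb; simp at hb
  | cons y l ih =>
    intro x hch b hb
    change List.IsChain _ (x :: y :: l) at hch
    rw [List.chain_cons] at hch
    rcases List.mem_cons.mp hb with h | h
    · exact ⟨x, h ▸ hch.1⟩
    · exact ih y hch.2 b h

/-- members of the dropLast of an upward chain are all heads -/
lemma chain_up_mem_some {r : α → Option α} :
    ∀ (l : List α) (x : α), List.Chain (fun u v => r u = some v) x l →
      ∀ b ∈ (x :: l).dropLast, ∃ a, r b = some a := by
  intro l
  induction l with
  | nil => intro x _ b hb; simp at hb
  | cons y l ih =>
    intro x hch b hb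
    change List.IsChain _ (x :: y :: l) at hch
    rw [List.chain_cons] at hch
    have hdl : (x :: y :: l).dropLast = x :: (y :: l).dropLast := by simp [List.dropLast]
    rw [hdl] at hb
    rcases List.mem_cons.mp hb with h | h
    · exact ⟨y, h ▸ hch.1⟩
    · exact ih y hch.2 b h

/-- A cycle forces the determinant to vanish. -/
lemma det_rowMat_of_cycle {i j : α} {r : α → Option α} (hri : r i = none)
    {a : α} (hcyc : Relation.TransGen (arcR r) a a) : (rowMat i j r).det = 0 := by
  rw [← Matrix.exists_vecMul_eq_zero_iff]
  obtain ⟨b, hab, hba⟩ := Relation.TransGen.tail'_iff.mp hcyc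
  obtain ⟨l, hch, hlast⟩ := List.exists_isChain_cons_of_relationReflTransGen hab
  -- full cycle list
  set L : List α := l ++ [a] with hL
  have hchL : List.Chain (arcR r) a L := by
    apply chain_concat' l a a hch
    rw [hlast]; exact hba
  have hLlast : (a :: L).getLast (List.cons_ne_nil a L) = a := by
    simp [hL, List.getLast_append]
  have hmem : ∀ b' ∈ L, ∃ a', r b' = some a' := by
    intro b' hb'
    rcases List.mem_append.mp hb' with h | h
    · exact chain_mem_some l a hch b' h
    · rw [List.mem_singleton] at h
      exact ⟨b, h ▸ hba⟩
  refine ⟨fun b' => (L.count b' : ℝ), ?_, ?_⟩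
  · intro h0
    have ha : a ∈ L := by simp [hL]
    have : (L.count a : ℝ) = 0 := congrFun h0 a
    rw [Nat.cast_eq_zero, List.count_eq_zero] at this
    exact this ha
  · rw [vecMul_eq_sum_rows]
    have hrows : ∀ b', (L.count b' : ℝ) • rowMat i j r b' = (L.count b' : ℝ) • baseRow r b' := by
      intro b'
      by_cases hbi : b' = i
      · have hcount0 : L.count b' = 0 := by
          rw [List.count_eq_zero]
          intro hmemi
          obtain ⟨a', ha'⟩ := hmem b' hmemi
          rw [hbi, hri] at ha'
          exact nomatch ha'
        rw [hcount0]
        simp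
      · rw [rowMat_row_ne hbi]
    calc (∑ b', (L.count b' : ℝ) • rowMat i j r b')
        = ∑ b', (L.count b' : ℝ) • baseRow r b' := by
          exact Finset.sum_congr rfl fun b' _ => hrows b'
      _ = Pi.single ((a :: L).getLast (List.cons_ne_nil a L)) 1 - Pi.single a 1 :=
          count_smul_baseRow L a hchL
      _ = 0 := by rw [hLlast]; abel

lemma exists_root {r : α → Option α} (hac : ∀ a, ¬ Relation.TransGen (arcR r) a a) :
    ∀ b, ∃ ρ, Relation.ReflTransGen (fun x y => r x = some y) b ρ ∧ r ρ = none := by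
  have H : ∀ n b, depthF r b ≤ n →
      ∃ ρ, Relation.ReflTransGen (fun x y => r x = some y) b ρ ∧ r ρ = none := by
    intro n
    induction n with
    | zero =>
      intro b hb
      cases hrb : r b with
      | none => exact ⟨b, Relation.ReflTransGen.refl, hrb⟩
      | some a => have := depthF_lt hac hrb; omega
    | succ n ih =>
      intro b hb
      cases hrb : r b with
      | none => exact ⟨b, Relation.ReflTransGen.refl, hrb⟩
      | some a =>
        have hlt := depthF_lt hac hrb
        obtain ⟨ρ, h1, h2⟩ := ih a (by omega)
        exact ⟨ρ, Relation.ReflTransGen.head hrb h1, h2⟩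
  exact fun b => H (depthF r b) b le_rfl

/-- No path from `i` to `j` forces the determinant to vanish. -/
lemma det_rowMat_of_no_path {i j : α} {r : α → Option α} (hri : r i = none)
    (hac : ∀ a, ¬ Relation.TransGen (arcR r) a a)
    (hnp : ¬ Relation.ReflTransGen (arcR r) i j) : (rowMat i j r).det = 0 := by
  rw [← Matrix.exists_vecMul_eq_zero_iff]
  obtain ⟨ρ, hup, hρ⟩ := exists_root hac j
  have hρi : ρ ≠ i := by
    intro hρieq
    apply hnp
    have h1 : Relation.ReflTransGen (Function.swap (arcR r)) j ρ :=
      Relation.ReflTransGen.mono (r := fun x y => r x = some y) (p := Function.swap (arcR r)) (fun x y hxy => hxy) j ρ hup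
    have h2 := Relation.reflTransGen_swap.mp h1
    rwa [hρieq] at h2
  obtain ⟨l, hch, hlast⟩ := List.exists_isChain_cons_of_relationReflTransGen hup
  have hji : j ≠ i := fun h => hnp (h ▸ Relation.ReflTransGen.refl)
  set w : α → ℝ := fun b =>
    (if b = i then 1 else 0) - ((j :: l).dropLast.count b : ℝ) - (if b = ρ then 1 else 0) with hw
  have hnotheads : ∀ b ∈ (j :: l).dropLast, ∃ a, r b = some a := chain_up_mem_some l j hch
  have hcnti : (j :: l).dropLast.count i = 0 := by
    rw [List.count_eq_zero]
    intro hmem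
    obtain ⟨a, ha⟩ := hnotheads i hmem
    rw [hri] at ha; exact nomatch ha
  have hcntρ : (j :: l).dropLast.count ρ = 0 := by
    rw [List.count_eq_zero]
    intro hmem
    obtain ⟨a, ha⟩ := hnotheads ρ hmem
    rw [hρ] at ha; exact nomatch ha
  refine ⟨w, ?_, ?_⟩
  · intro h0
    have hvi : w i = 1 := by
      show (if i = i then (1:ℝ) else 0) - ((j :: l).dropLast.count i : ℝ)
          - (if i = ρ then 1 else 0) = 1
      rw [if_pos rfl, hcnti, if_neg (show ¬ i = ρ from fun h => hρi h.symm)]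
      norm_num
    have hvi0 : w i = 0 := congrFun h0 i
    rw [hvi] at hvi0
    norm_num at hvi0
  · rw [vecMul_eq_sum_rows]
    have hsplit : ∀ b, w b • rowMat i j r b =
        (if b = i then (1:ℝ) else 0) • rowMat i j r b
          - ((j :: l).dropLast.count b : ℝ) • rowMat i j r b
          - (if b = ρ then (1:ℝ) else 0) • rowMat i j r b := by
      intro b
      rw [hw]
      simp only [sub_smul]
    calc ∑ b, w b • rowMat i j r b
        = (∑ b, (if b = i then (1:ℝ) else 0) • rowMat i j r b)
          - (∑ b, ((j :: l).dropLast.count b : ℝ) • rowMat i j r b)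
          - (∑ b, (if b = ρ then (1:ℝ) else 0) • rowMat i j r b) := by
          rw [← Finset.sum_sub_distrib, ← Finset.sum_sub_distrib]
          exact Finset.sum_congr rfl fun b _ => hsplit b
      _ = rowMat i j r i
          - (Pi.single j 1 - Pi.single ρ 1)
          - rowMat i j r ρ := by
          congr 1
          · congr 1
            · rw [Finset.sum_eq_single i]
              · simp
              · intro b _ hb; simp [hb]
              · intro h; exact absurd (Finset.mem_univ i) h
            · have := count_smul_baseRow_up l j hch
              rw [hlast] at this
              rw [← this]
              apply Finset.sum_congr rfl
              intro b _
              by_cases hb : b = i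
              · rw [hb, hcnti]; simp
              · rw [rowMat_row_ne hb]
          · rw [Finset.sum_eq_single ρ]
            · simp
            · intro b _ hb; simp [hb]
            · intro h; exact absurd (Finset.mem_univ ρ) h
      _ = 0 := by
          rw [rowMat_row_i, rowMat_row_ne hρi]
          unfold baseRow
          rw [hρ]
          simp only [Option.elim]
          abel

/-- A path from `i` to `j` makes the determinant 1. -/
lemma det_rowMat_of_path {i j : α} {r : α → Option α} (hri : r i = none)
    (hac : ∀ a, ¬ Relation.TransGen (arcR r) a a)
    (hp : Relation.ReflTransGen (arcR r) i j) : (rowMat i j r).det = 1 := by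
  have hbase_i : baseRow r i = Pi.single i 1 := by
    unfold baseRow; rw [hri]; simp
  have hupd : ∀ c : α, rowMat i c r = (Matrix.of (baseRow r)).updateRow i (Pi.single c 1) := by
    intro c
    ext b b'
    by_cases hb : b = i
    · subst hb
      rw [Matrix.updateRow_self]
      exact congrFun (rowMat_row_i) b'
    · rw [Matrix.updateRow_ne hb]
      exact congrFun (rowMat_row_ne hb) b'
  rw [hupd j]
  have key : ∀ c, Relation.ReflTransGen (arcR r) i c →
      ((Matrix.of (baseRow r)).updateRow i (Pi.single c 1)).det = 1 := by
    intro c hc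
    induction hc with
    | refl =>
      rw [show (Pi.single i (1:ℝ)) = (Matrix.of (baseRow r)) i from hbase_i.symm]
      rw [Matrix.updateRow_eq_self, det_baseMat hac]
    | tail hb harc ih =>
      rename_i b c
      have hci : c ≠ i := by
        intro hcieq
        rw [show arcR r b c = (r c = some b) from rfl, hcieq, hri] at harc
        exact nomatch harc
      have hrowc : (Matrix.of (baseRow r)) c = Pi.single c 1 - Pi.single b 1 := by
        show baseRow r c = _
        unfold baseRow
        rw [show r c = some b from harc]
        rfl
      have hsingle : (Pi.single b (1:ℝ)) = Pi.single c 1 - (Matrix.of (baseRow r)) c := by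
        rw [hrowc]; abel
      rw [hsingle, sub_eq_add_neg, Matrix.det_updateRow_add] at ih
      have hzero : ((Matrix.of (baseRow r)).updateRow i (-(Matrix.of (baseRow r) c))).det = 0 := by
        rw [show -(Matrix.of (baseRow r) c) = (-1 : ℝ) • (Matrix.of (baseRow r) c) from by
          ext x; simp]
        rw [Matrix.det_updateRow_smul]
        have h2 : ((Matrix.of (baseRow r)).updateRow i (Matrix.of (baseRow r) c)).det = 0 := by
          apply Matrix.det_zero_of_row_eq (Ne.symm hci)
          rw [Matrix.updateRow_self, Matrix.updateRow_ne hci]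
        rw [h2, mul_zero]
      rw [hzero, add_zero] at ih
      exact ih
  exact key j hp

noncomputable def chs (i : α) : α → Finset (Option α) :=
  fun b => if b = i then {none} else Finset.univ

noncomputable def gRow (ε : α → α → ℝ) (lam : ℝ) (i j : α) (b : α) (o : Option α) : α → ℝ :=
  if b = i then Pi.single j 1
  else o.elim (lam • (Pi.single b 1 : α → ℝ))
    fun a => (-ε a b) • ((Pi.single b 1 : α → ℝ) - Pi.single a 1)

noncomputable def cCoef (ε : α → α → ℝ) (lam : ℝ) (i : α) (r : α → Option α) (b : α) : ℝ :=
  if b = i then 1 else (r b).elim lam fun a => -ε a b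

lemma chs_self (i : α) : chs i i = ({none} : Finset (Option α)) := if_pos rfl

lemma chs_ne {i b : α} (hb : b ≠ i) : chs i b = (Finset.univ : Finset (Option α)) := if_neg hb

lemma gRow_self (ε : α → α → ℝ) (lam : ℝ) (i j : α) (o : Option α) :
    gRow ε lam i j i o = Pi.single j 1 := if_pos rfl

lemma gRow_ne (ε : α → α → ℝ) (lam : ℝ) {i : α} (j : α) {b : α} (hb : b ≠ i) (o : Option α) :
    gRow ε lam i j b o
      = o.elim (lam • (Pi.single b 1 : α → ℝ))
          (fun a => (-ε a b) • ((Pi.single b 1 : α → ℝ) - Pi.single a 1)) :=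
  if_neg hb

lemma cCoef_self (ε : α → α → ℝ) (lam : ℝ) (i : α) (r : α → Option α) :
    cCoef ε lam i r i = 1 := if_pos rfl

lemma cCoef_ne (ε : α → α → ℝ) (lam : ℝ) {i b : α} (r : α → Option α) (hb : b ≠ i) :
    cCoef ε lam i r b = (r b).elim lam fun a => -ε a b := if_neg hb

lemma row_decomp (ε : α → α → ℝ) (hdiag : ∀ a, ε a a = 0) (lam : ℝ) (i j b : α) :
    ((lam • (1 : Matrix α α ℝ) - kirchhoff ε).updateRow i (Pi.single j 1)) b
      = ∑ o ∈ chs i b, gRow ε lam i j b o := by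
  by_cases hb : b = i
  · subst hb
    rw [Matrix.updateRow_self, chs_self, Finset.sum_singleton, gRow_self]
  · rw [Matrix.updateRow_ne hb]
    funext c
    rw [show (∑ o ∈ chs i b, gRow ε lam i j b o) c = ∑ o ∈ chs i b, gRow ε lam i j b o c from
      Finset.sum_apply c (chs i b) _]
    rw [chs_ne hb]
    have hg : ∀ o : Option α, gRow ε lam i j b o c
        = o.elim (lam * (if c = b then (1:ℝ) else 0))
            fun a => (-ε a b) * ((if c = b then (1:ℝ) else 0) - (if c = a then 1 else 0)) := by
      intro o
      rw [gRow_ne ε lam j hb o]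
      cases o with
      | none => simp [Pi.single_apply]
      | some a => simp [Pi.single_apply]
    rw [Finset.sum_congr rfl fun o _ => hg o]
    rw [Fintype.sum_option]
    simp only [Option.elim]
    have hL : (lam • (1 : Matrix α α ℝ) - kirchhoff ε) b c
        = lam * (if b = c then (1:ℝ) else 0)
          - (if b = c then ∑ k ∈ Finset.univ.erase b, ε k b else - ε c b) := by
      rw [Matrix.sub_apply, Matrix.smul_apply, Matrix.one_apply]
      rw [show kirchhoff ε b c = if b = c then ∑ k ∈ Finset.univ.erase b, ε k b else - ε c b
        from rfl]
      rw [smul_eq_mul]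
    rw [hL]
    by_cases hbc : b = c
    · subst hbc
      simp only [eq_self_iff_true, if_true, mul_one]
      have hs : ∀ a : α, (-ε a b) * ((1:ℝ) - (if b = a then 1 else 0))
          = if a = b then 0 else -ε a b := by
        intro a
        by_cases hab : a = b
        · subst hab; simp
        · rw [if_neg (fun h => hab h.symm), if_neg hab]; ring
      rw [Finset.sum_congr rfl fun a _ => hs a]
      have h1 : ∑ a : α, (if a = b then (0:ℝ) else -ε a b)
          = ∑ a ∈ Finset.univ.erase b, (if a = b then (0:ℝ) else -ε a b) :=
        (Finset.sum_erase (f := fun a => if a = b then (0:ℝ) else -ε a b) Finset.univ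
          (by simp)).symm
      have h2 : ∑ a ∈ Finset.univ.erase b, (if a = b then (0:ℝ) else -ε a b)
          = ∑ a ∈ Finset.univ.erase b, -ε a b :=
        Finset.sum_congr rfl fun a ha => if_neg (Finset.ne_of_mem_erase ha)
      rw [h1, h2, Finset.sum_neg_distrib]
      ring
    · have hcb : ¬ c = b := fun h => hbc h.symm
      simp only [if_neg hbc, if_neg hcb]
      have hs : ∀ a : α, (-ε a b) * ((0:ℝ) - (if c = a then 1 else 0))
          = if c = a then ε a b else 0 := by
        intro a
        by_cases hca : c = a
        · rw [if_pos hca, if_pos hca]; ring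
        · rw [if_neg hca, if_neg hca]; ring
      rw [Finset.sum_congr rfl fun a _ => hs a]
      rw [Finset.sum_ite_eq Finset.univ c (fun a => ε a b)]
      simp

lemma gRow_eq_smul (ε : α → α → ℝ) (lam : ℝ) (i j : α) (r : α → Option α) (b : α) :
    gRow ε lam i j b (r b) = fun c => cCoef ε lam i r b * rowMat i j r b c := by
  by_cases hb : b = i
  · subst hb
    rw [gRow_self, cCoef_self]
    funext c
    rw [rowMat_row_i]
    ring
  · rw [gRow_ne ε lam j hb (r b), cCoef_ne ε lam r hb]
    funext c
    rw [show rowMat i j r b = baseRow r b from rowMat_row_ne hb]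
    unfold baseRow
    cases r b with
    | none => simp
    | some a => simp

noncomputable def choiceOf (F : Finset (α × α)) (b : α) : Option α :=
  if h : ∃ a, (a, b) ∈ F then some h.choose else none

lemma choiceOf_some {F : Finset (α × α)}
    (hcard : ∀ b : α, (F.filter fun p => p.2 = b).card ≤ 1) (a b : α) :
    choiceOf F b = some a ↔ (a, b) ∈ F := by
  constructor
  · intro h
    unfold choiceOf at h
    by_cases hex : ∃ a', (a', b) ∈ F
    · rw [dif_pos hex] at h
      have hspec := hex.choose_spec
      rwa [Option.some_inj.mp h] at hspec
    · rw [dif_neg hex] at h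
      exact nomatch h
  · intro h
    have hex : ∃ a', (a', b) ∈ F := ⟨a, h⟩
    unfold choiceOf
    rw [dif_pos hex]
    congr 1
    have h1 : (hex.choose, b) ∈ F.filter fun p => p.2 = b :=
      Finset.mem_filter.mpr ⟨hex.choose_spec, rfl⟩
    have h2 : (a, b) ∈ F.filter fun p => p.2 = b := Finset.mem_filter.mpr ⟨h, rfl⟩
    have := Finset.card_le_one.mp (hcard b) _ h1 _ h2
    exact (Prod.mk.injEq _ _ _ _ ▸ this).1

lemma choiceOf_none {F : Finset (α × α)} {b : α} (h : ∀ a, (a, b) ∉ F) :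
    choiceOf F b = none := by
  unfold choiceOf
  rw [dif_neg]
  rintro ⟨a, ha⟩
  exact h a ha

/-- determinant expansion over all choice functions -/
lemma det_updateRow_expand (ε : α → α → ℝ) (hdiag : ∀ a, ε a a = 0) (lam : ℝ) (i j : α) :
    ((lam • (1 : Matrix α α ℝ) - kirchhoff ε).updateRow i (Pi.single j 1)).det
      = ∑ r ∈ Fintype.piFinset (chs i),
          (∏ b, cCoef ε lam i r b) * (rowMat i j r).det := by
  have h1 : ((lam • (1 : Matrix α α ℝ) - kirchhoff ε).updateRow i (Pi.single j 1)).det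
      = Matrix.detRowAlternating (fun b => ∑ o ∈ chs i b, gRow ε lam i j b o) := by
    have he : ((lam • (1 : Matrix α α ℝ) - kirchhoff ε).updateRow i (Pi.single j 1))
        = Matrix.of (fun b => ∑ o ∈ chs i b, gRow ε lam i j b o) := by
      ext b c
      have := congrFun (row_decomp ε hdiag lam i j b) c
      exact this
    rw [he]
    rfl
  rw [h1]
  have h3 := (Matrix.detRowAlternating (R := ℝ) (n := α)).toMultilinearMap.map_sum_finset
      (gRow ε lam i j) (chs i)
  simp only [AlternatingMap.coe_multilinearMap] at h3
  rw [h3]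
  apply Finset.sum_congr rfl
  intro r _
  have h2 : (Matrix.detRowAlternating (fun b => gRow ε lam i j b (r b)) : ℝ)
      = (Matrix.of fun b c => cCoef ε lam i r b * rowMat i j r b c).det := by
    congr 1
    funext b
    exact gRow_eq_smul ε lam i j r b
  rw [h2, Matrix.det_mul_column]

lemma piFinset_chs_none {i : α} {r : α → Option α} (hr : r ∈ Fintype.piFinset (chs i)) :
    r i = none := by
  have := Fintype.mem_piFinset.mp hr i
  rw [chs_self] at this
  exact Finset.mem_singleton.mp this

/-- trichotomy for the determinant of the 0/±1 matrix -/
lemma det_rowMat_eq_ite {i j : α} {r : α → Option α} (hri : r i = none) :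
    (rowMat i j r).det
      = if (∀ a, ¬ Relation.TransGen (arcR r) a a) ∧ Relation.ReflTransGen (arcR r) i j
        then 1 else 0 := by
  by_cases hac : ∀ a, ¬ Relation.TransGen (arcR r) a a
  · by_cases hp : Relation.ReflTransGen (arcR r) i j
    · rw [if_pos ⟨hac, hp⟩]
      exact det_rowMat_of_path hri hac hp
    · rw [if_neg (fun h => hp h.2)]
      exact det_rowMat_of_no_path hri hac hp
  · rw [if_neg (fun h => hac h.1)]
    push_neg at hac
    obtain ⟨a, ha⟩ := hac
    exact det_rowMat_of_cycle hri ha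

def graphOf (r : α → Option α) : Finset (α × α) :=
  Finset.univ.filter fun p : α × α => r p.2 = some p.1

lemma mem_graphOf {r : α → Option α} {a b : α} : (a, b) ∈ graphOf r ↔ r b = some a := by
  unfold graphOf
  simp

lemma graphOf_card (r : α → Option α) (b : α) :
    ((graphOf r).filter fun p => p.2 = b).card ≤ 1 := by
  apply Finset.card_le_one.mpr
  intro p hp q hq
  rw [Finset.mem_filter] at hp hq
  have hp1 : r b = some p.1 := by
    have h := hp.1
    rw [show p = (p.1, p.2) from rfl, mem_graphOf] at h
    rwa [hp.2] at h
  have hq1 : r b = some q.1 := by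
    have h := hq.1
    rw [show q = (q.1, q.2) from rfl, mem_graphOf] at h
    rwa [hq.2] at h
  exact Prod.ext (Option.some_inj.mp (hp1.symm.trans hq1)) (hp.2.trans hq.2.symm)

lemma graphOf_rel (r : α → Option α) :
    (fun x y : α => (x, y) ∈ graphOf r) = arcR r := by
  funext a b
  exact propext mem_graphOf

lemma choiceOf_graphOf (r : α → Option α) : choiceOf (graphOf r) = r := by
  funext b
  cases hrb : r b with
  | some a => exact (choiceOf_some (graphOf_card r) a b).mpr (mem_graphOf.mpr hrb)
  | none =>
    apply choiceOf_none
    intro a ha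
    rw [mem_graphOf, hrb] at ha
    exact nomatch ha

lemma graphOf_choiceOf {F : Finset (α × α)}
    (hcard : ∀ b : α, (F.filter fun p => p.2 = b).card ≤ 1) :
    graphOf (choiceOf F) = F := by
  ext p
  rw [show p = (p.1, p.2) from rfl, mem_graphOf]
  exact choiceOf_some hcard p.1 p.2

lemma arcR_choiceOf {F : Finset (α × α)}
    (hcard : ∀ b : α, (F.filter fun p => p.2 = b).card ≤ 1) :
    arcR (choiceOf F) = fun x y : α => (x, y) ∈ F := by
  funext a b
  exact propext (choiceOf_some hcard a b)

end Core

lemma cofactor_eq_det_updateRow {m : ℕ} (M : Matrix (Fin (m+1)) (Fin (m+1)) ℝ)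
    (i j : Fin (m+1)) :
    cofactor M i j = (M.updateRow i (Pi.single j 1)).det := by
  rw [Matrix.det_succ_row (M.updateRow i (Pi.single j 1)) i]
  rw [Finset.sum_eq_single j]
  · rw [Matrix.updateRow_self]
    simp only [Pi.single_eq_same, mul_one]
    unfold cofactor
    congr 2
    ext k l
    rw [Matrix.submatrix_apply, Matrix.submatrix_apply,
      Matrix.updateRow_ne (Fin.succAbove_ne i k)]
  · intro c _ hc
    rw [Matrix.updateRow_self]
    simp only [Pi.single_eq_of_ne hc, mul_zero, zero_mul]
  · intro h
    exact absurd (Finset.mem_univ j) h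


/-- **Forest expansion of the adjugate of the Laplacian characteristic matrix**
(Remark). The cofactor of the `(i,j)` entry of `λI − L(Γ)` equals
`∑_{φ ⊆ V∖{i,j}} λ^{|φ|} ∑_{F ∈ 𝔉_{φ∪{i}}^{i→j}} (−1)^{d(F)} ε(F)`, where `d(F)` is the
number of arcs of `F`. -/
theorem charmatrix_cofactor_signed_forests (n : ℕ) (ε : Fin (n + 1) → Fin (n + 1) → ℝ)
    (hdiag : ∀ a, ε a a = 0) (i j : Fin (n + 1)) (lam : ℝ) :
    cofactor (lam • (1 : Matrix (Fin (n + 1)) (Fin (n + 1)) ℝ) - kirchhoff ε) i j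
      = ∑ φ ∈ ((Finset.univ : Finset (Fin (n + 1))) \ {i, j}).powerset,
          lam ^ φ.card *
            ∑ F ∈ divForestsRootedAt (insert i φ) ∩ divForestsFromTo i j,
              (-1 : ℝ) ^ F.card * arcWt ε F := by
  rw [cofactor_eq_det_updateRow, det_updateRow_expand ε hdiag lam i j]
  have hstep1 : ∑ r ∈ Fintype.piFinset (chs i),
        (∏ b, cCoef ε lam i r b) * (rowMat i j r).det
      = ∑ r ∈ (Fintype.piFinset (chs i)).filter
          (fun r => (∀ a, ¬ Relation.TransGen (arcR r) a a)
            ∧ Relation.ReflTransGen (arcR r) i j),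
          ∏ b, cCoef ε lam i r b := by
    rw [Finset.sum_filter]
    apply Finset.sum_congr rfl
    intro r hr
    rw [det_rowMat_eq_ite (piFinset_chs_none hr)]
    by_cases h : (∀ a, ¬ Relation.TransGen (arcR r) a a) ∧ Relation.ReflTransGen (arcR r) i j
    · rw [if_pos h, if_pos h, mul_one]
    · rw [if_neg h, if_neg h, mul_zero]
  rw [hstep1]
  have hstep2 : ∑ φ ∈ ((Finset.univ : Finset (Fin (n + 1))) \ {i, j}).powerset, lam ^ φ.card *
        ∑ F ∈ divForestsRootedAt (insert i φ) ∩ divForestsFromTo i j,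
          (-1:ℝ)^F.card * arcWt ε F
      = ∑ x ∈ ((Finset.univ : Finset (Fin (n + 1))) \ {i, j}).powerset.sigma
            (fun φ => divForestsRootedAt (insert i φ) ∩ divForestsFromTo i j),
          lam ^ x.1.card * ((-1:ℝ)^x.2.card * arcWt ε x.2) := by
    rw [Finset.sum_congr rfl (fun φ _ => Finset.mul_sum _ _ _)]
    exact Finset.sum_sigma' _ _ _
  rw [hstep2]
  refine Finset.sum_nbij'
    (fun r => (⟨(Finset.univ.filter fun b => r b = none).erase i, graphOf r⟩ :
      Σ _ : Finset (Fin (n+1)), Finset (Fin (n+1) × Fin (n+1))))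
    (fun x => choiceOf x.2) ?h1 ?h2 ?h3 ?h4 ?h5
  case h1 =>
    intro r hr
    obtain ⟨hrp, hac, hpath⟩ := Finset.mem_filter.mp hr
    have hri := piFinset_chs_none hrp
    rw [Finset.mem_sigma]
    constructor
    · rw [Finset.mem_powerset]
      intro b hb
      rw [Finset.mem_erase, Finset.mem_filter] at hb
      obtain ⟨hbi, -, hbnone⟩ := hb
      rw [Finset.mem_sdiff]
      refine ⟨Finset.mem_univ b, ?_⟩
      intro hbij
      rw [Finset.mem_insert, Finset.mem_singleton] at hbij
      rcases hbij with h | h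
      · exact hbi h
      · subst h
        rcases (Relation.reflTransGen_iff_eq_or_transGen.mp hpath) with h' | h'
        · exact hbi h'
        · obtain ⟨c, -, hc⟩ := Relation.TransGen.tail'_iff.mp h'
          rw [show arcR r c b = (r b = some c) from rfl, hbnone] at hc
          exact nomatch hc
    · have hforest : IsDivForest (graphOf r) := by
        refine ⟨?_, graphOf_card r, ?_⟩
        · intro p hp
          have hmem := mem_graphOf.mp (show (p.1, p.2) ∈ graphOf r from hp)
          intro heq
          exact hac p.2 (Relation.TransGen.single
            (show arcR r p.2 p.2 from heq ▸ hmem))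
        · rw [graphOf_rel]; exact hac
      have hroot : rootSet (graphOf r)
          = insert i ((Finset.univ.filter fun b => r b = none).erase i) := by
        ext v
        simp only [rootSet, Finset.mem_filter, Finset.mem_univ, true_and]
        constructor
        · intro hv
          cases hrv : r v with
          | none =>
            by_cases hvi : v = i
            · subst hvi; exact Finset.mem_insert_self _ _
            · exact Finset.mem_insert_of_mem (Finset.mem_erase.mpr
                ⟨hvi, Finset.mem_filter.mpr ⟨Finset.mem_univ v, hrv⟩⟩)
          | some a => exact absurd (mem_graphOf.mpr hrv) (hv a)
        · intro hv a ha
          have hrv := mem_graphOf.mp ha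
          rcases Finset.mem_insert.mp hv with h | h
          · rw [h, hri] at hrv; exact nomatch hrv
          · rw [(Finset.mem_filter.mp (Finset.mem_of_mem_erase h)).2] at hrv
            exact nomatch hrv
      rw [Finset.mem_inter]
      constructor
      · simp only [divForestsRootedAt, Finset.mem_filter, Finset.mem_univ, true_and]
        exact ⟨hforest, hroot⟩
      · simp only [divForestsFromTo, Finset.mem_filter, Finset.mem_univ, true_and]
        refine ⟨hforest, ?_, ?_⟩
        · intro a ha
          have hmem := mem_graphOf.mp ha
          rw [hri] at hmem; exact nomatch hmem
        · rw [graphOf_rel]; exact hpath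
  case h2 =>
    intro x hx
    rw [Finset.mem_sigma] at hx
    obtain ⟨hx1, hx2⟩ := hx
    rw [Finset.mem_inter] at hx2
    obtain ⟨hxr, hxf⟩ := hx2
    simp only [divForestsRootedAt, Finset.mem_filter, Finset.mem_univ, true_and] at hxr
    simp only [divForestsFromTo, Finset.mem_filter, Finset.mem_univ, true_and] at hxf
    obtain ⟨hforest, hroot⟩ := hxr
    obtain ⟨-, hnoi, hpath⟩ := hxf
    obtain ⟨hne, hcard, hacyc⟩ := hforest
    rw [Finset.mem_filter]
    refine ⟨?_, ?_, ?_⟩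
    · rw [Fintype.mem_piFinset]
      intro b
      by_cases hbi : b = i
      · subst hbi
        rw [chs_self, Finset.mem_singleton]
        exact choiceOf_none hnoi
      · rw [chs_ne hbi]; exact Finset.mem_univ _
    · rw [arcR_choiceOf hcard]; exact hacyc
    · rw [arcR_choiceOf hcard]; exact hpath
  case h3 =>
    intro r hr
    exact choiceOf_graphOf r
  case h4 =>
    intro x hx
    rw [Finset.mem_sigma] at hx
    obtain ⟨hx1, hx2⟩ := hx
    rw [Finset.mem_inter] at hx2
    obtain ⟨hxr, hxf⟩ := hx2
    simp only [divForestsRootedAt, Finset.mem_filter, Finset.mem_univ, true_and] at hxr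
    simp only [divForestsFromTo, Finset.mem_filter, Finset.mem_univ, true_and] at hxf
    obtain ⟨hforest, hroot⟩ := hxr
    obtain ⟨-, hnoi, hpath⟩ := hxf
    obtain ⟨hne, hcard, hacyc⟩ := hforest
    have hF : graphOf (choiceOf x.2) = x.2 := graphOf_choiceOf hcard
    have hφ : (Finset.univ.filter fun b => choiceOf x.2 b = none).erase i = x.1 := by
      have hfil : (Finset.univ.filter fun b => choiceOf x.2 b = none) = insert i x.1 := by
        ext v
        rw [Finset.mem_filter]
        constructor
        · rintro ⟨-, hv⟩
          rw [← hroot]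
          simp only [rootSet, Finset.mem_filter, Finset.mem_univ, true_and]
          intro a ha
          have hmem := (choiceOf_some hcard a v).mpr ha
          rw [hv] at hmem
          exact nomatch hmem
        · intro hv
          refine ⟨Finset.mem_univ v, ?_⟩
          rw [← hroot] at hv
          simp only [rootSet, Finset.mem_filter, Finset.mem_univ, true_and] at hv
          exact choiceOf_none hv
      rw [hfil]
      apply Finset.erase_insert
      intro hi
      have hmem := Finset.mem_powerset.mp hx1 hi
      rw [Finset.mem_sdiff] at hmem
      exact hmem.2 (Finset.mem_insert_self i {j})
    have hfin : (⟨(Finset.univ.filter fun b => choiceOf x.2 b = none).erase i,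
        graphOf (choiceOf x.2)⟩ :
        Σ _ : Finset (Fin (n+1)), Finset (Fin (n+1) × Fin (n+1))) = ⟨x.1, x.2⟩ := by
      rw [hφ, hF]
    exact hfin.trans (Sigma.eta x)
  case h5 =>
    intro r hr
    obtain ⟨hrp, hac, hpath⟩ := Finset.mem_filter.mp hr
    have hri := piFinset_chs_none hrp
    show (∏ b, cCoef ε lam i r b)
      = lam ^ ((Finset.univ.filter fun b => r b = none).erase i).card
        * ((-1:ℝ)^(graphOf r).card * arcWt ε (graphOf r))
    have hiN : i ∈ Finset.univ.filter fun b => r b = none :=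
      Finset.mem_filter.mpr ⟨Finset.mem_univ i, hri⟩
    rw [← Finset.prod_filter_mul_prod_filter_not Finset.univ (fun b => r b = none)
      (cCoef ε lam i r)]
    congr 1
    · rw [← Finset.mul_prod_erase _ _ hiN, cCoef_self, one_mul]
      rw [Finset.prod_congr rfl (fun b hb => show cCoef ε lam i r b = lam from ?_)]
      · rw [Finset.prod_const]
      · rw [Finset.mem_erase] at hb
        rw [cCoef_ne ε lam r hb.1, (Finset.mem_filter.mp hb.2).2]
        rfl
    · have hgetmem : ∀ b ∈ Finset.univ.filter (fun b => ¬ r b = none), (r b).isSome :=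
        fun b hb => Option.ne_none_iff_isSome.mp (Finset.mem_filter.mp hb).2
      have hprod : ∏ b ∈ Finset.univ.filter (fun b => ¬ r b = none), cCoef ε lam i r b
          = ∏ p ∈ graphOf r, (-ε p.1 p.2) := by
        refine Finset.prod_bij' (fun b hb => ((r b).get (hgetmem b hb), b))
          (fun p _ => p.2) ?_ ?_ ?_ ?_ ?_
        · intro b hb
          rw [mem_graphOf]
          exact (Option.some_get (hgetmem b hb)).symm
        · intro p hp
          rw [Finset.mem_filter]
          refine ⟨Finset.mem_univ _, ?_⟩
          have hmem := mem_graphOf.mp (show (p.1, p.2) ∈ graphOf r from hp)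
          rw [hmem]
          exact fun h => nomatch h
        · intro b hb
          rfl
        · intro p hp
          have hmem := mem_graphOf.mp (show (p.1, p.2) ∈ graphOf r from hp)
          simp only [hmem, Option.get_some]
        · intro b hb
          have hb2 := (Finset.mem_filter.mp hb).2
          have hbi : b ≠ i := fun h => hb2 (h ▸ hri)
          rw [cCoef_ne ε lam r hbi]
          obtain ⟨a, ha⟩ := Option.ne_none_iff_exists'.mp hb2
          simp only [ha, Option.elim, Option.get_some]
      rw [hprod]
      rw [Finset.prod_congr rfl (fun p _ => show -ε p.1 p.2 = (-1:ℝ) * ε p.1 p.2 by ring)]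
      rw [Finset.prod_mul_distrib, Finset.prod_const]
      rfl
end
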